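/- arXiv:2104.07424 — 6 statements merged into one kernel-verified Lean document; each statement's English description precedes it below -/
import Mathlib

section
/- Let (ξ_n)_{n≥1} be i.i.d. nonnegative real random variables with mean a = E[ξ₁] ∈ (0,∞) and let μ(t) = #{n ≥ 1 : ξ₁ + ⋯ + ξ_n ≤ t} be the renewal counting process. Let a′ ∈ (0,a), let x > 0, and let (v_p)_{p≥1} be positive reals with v_p → 0 such that for some δ > 0 one has v_p ≤ p^{−δ} for all sufficiently large p. Then p·P(v_p·μ(x/v_p)/x ≥ 1/a′) → 0 as p → ∞. (This is Assumption R2 of the paper for a renewal process, valid for every a′ < a.) -/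
open MeasureTheory ProbabilityTheory Filter Real Topology

/-! Since `𝔼 ξ₀ = a > b > a'`, some `θ > 0` has `𝔼 e^{-θ ξ₀} ≤ e^{-θ b}`. The event `μ(T) ≥ T / a'`
forces `ξ₀ + ⋯ + ξₙ₋₁ ≤ T` for `n = ⌈T / a'⌉`, which by independence and Chernoff's bound has
probability at most `e^{θ T - n θ b} ≤ e^{-c T}` with `c = θ (b - a') / a' > 0`. For
`T = x / v_p ≥ x p^δ` this is at most `exp (-c x p^δ)`, which beats the factor `p`. -/

section Laplace

variable {Ω : Type*} [MeasurableSpace Ω] {P : Measure Ω} {X : Ω → ℝ}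

lemma tendsto_one_sub_exp_neg_mul_div (x : ℝ) :
    Tendsto (fun s => (1 - exp (-(s * x))) / s) (𝓝[≠] 0) (𝓝 x) := by
  have hderiv : HasDerivAt (fun s => 1 - exp (-(s * x))) x 0 := by
    simpa using (((hasDerivAt_id (0 : ℝ)).mul_const x).neg.exp).const_sub 1
  simpa [slope_fun_def_field] using hderiv.tendsto_slope

lemma integrable_exp_mul_of_nonpos_of_nonneg [IsFiniteMeasure P] (hX : AEMeasurable X P)
    (h0 : 0 ≤ᵐ[P] X) {t : ℝ} (ht : t ≤ 0) : Integrable (fun ω => exp (t * X ω)) P := by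
  refine .of_mem_Icc 0 1 (measurable_exp.comp_aemeasurable (hX.const_mul t)) ?_
  filter_upwards [h0] with ω hω
  exact ⟨(exp_pos _).le, exp_le_one_iff.mpr (mul_nonpos_of_nonpos_of_nonneg ht hω)⟩

/-- Dominated convergence: `0 ≤ (1 - e^{-sx}) / s ≤ x` for `s > 0`, so no exponential moment of `X`
is needed. -/
lemma tendsto_integral_one_sub_exp_neg_mul_div (h0 : 0 ≤ᵐ[P] X) (hint : Integrable X P) :
    Tendsto (fun s => ∫ ω, (1 - exp (-(s * X ω))) / s ∂P) (𝓝[>] 0) (𝓝 (∫ ω, X ω ∂P)) := by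
  refine tendsto_integral_filter_of_dominated_convergence X ?_ ?_ hint ?_
  · exact Eventually.of_forall fun s => (by fun_prop : Continuous fun y => (1 - exp (-(s * y))) / s)
      |>.comp_aestronglyMeasurable hint.aestronglyMeasurable
  · filter_upwards [self_mem_nhdsWithin] with s (hs : 0 < s)
    filter_upwards [h0] with ω hω
    have hexp : 1 - exp (-(s * X ω)) ≤ s * X ω := by linarith [add_one_le_exp (-(s * X ω))]
    have hexp' : 0 ≤ 1 - exp (-(s * X ω)) := by
      rw [sub_nonneg, exp_le_one_iff, neg_nonpos]; exact mul_nonneg hs.le hω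
    rw [norm_of_nonneg (div_nonneg hexp' hs.le), div_le_iff₀ hs]
    linarith
  · exact ae_of_all _ fun ω =>
      (tendsto_one_sub_exp_neg_mul_div (X ω)).mono_left (nhdsGT_le_nhdsNE 0)

variable [IsProbabilityMeasure P]

lemma exists_mgf_neg_le_exp_of_lt_integral (h0 : 0 ≤ᵐ[P] X) (hint : Integrable X P) {b : ℝ}
    (hb : b < ∫ ω, X ω ∂P) : ∃ θ > 0, mgf X P (-θ) ≤ exp (-(θ * b)) := by
  obtain ⟨s, hbs, hs⟩ := ((tendsto_integral_one_sub_exp_neg_mul_div h0 hint).eventually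
    (lt_mem_nhds hb)).and self_mem_nhdsWithin |>.exists
  have hs : 0 < s := hs
  have hmgf : ∫ ω, (1 - exp (-(s * X ω))) / s ∂P = (1 - mgf X P (-s)) / s := by
    have hint_exp :=
      integrable_exp_mul_of_nonpos_of_nonneg hint.aemeasurable h0 (neg_nonpos.mpr hs.le)
    simp only [div_eq_mul_inv, integral_mul_const, mgf, neg_mul]
    rw [integral_sub (integrable_const 1) (by simpa [neg_mul] using hint_exp)]
    simp
  rw [hmgf, lt_div_iff₀ hs] at hbs
  refine ⟨s, hs, ?_⟩
  linarith [add_one_le_exp (-(s * b))]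

end Laplace

section Renewal

variable {Ω : Type*} {ξ : ℕ → Ω → ℝ}

/-- The `n`-th renewal epoch is `∑ k ∈ range n, ξ k`, the variables being indexed from `0`. -/
noncomputable def renewalCount (ξ : ℕ → Ω → ℝ) (t : ℝ) (ω : Ω) : ℕ :=
  {n : ℕ | 1 ≤ n ∧ ∑ k ∈ Finset.range n, ξ k ω ≤ t}.ncard

lemma sum_range_le_of_le_renewalCount {ω : Ω} (hnonneg : ∀ k, 0 ≤ ξ k ω) {n : ℕ} (hn : 1 ≤ n)
    {t : ℝ} (h : n ≤ renewalCount ξ t ω) : ∑ k ∈ Finset.range n, ξ k ω ≤ t := by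
  have hmono : Monotone fun m => ∑ k ∈ Finset.range m, ξ k ω :=
    monotone_nat_of_le_succ fun m => by rw [Finset.sum_range_succ]; linarith [hnonneg m]
  by_contra! hlt
  have hsub : {m : ℕ | 1 ≤ m ∧ ∑ k ∈ Finset.range m, ξ k ω ≤ t} ⊆ Finset.Ico 1 n := by
    rintro m ⟨hm1, hmt⟩
    simp only [Finset.coe_Ico, Set.mem_Ico]
    exact ⟨hm1, lt_of_not_ge fun hnm => (hlt.trans_le (hmono hnm)).not_ge hmt⟩
  have hcard := Set.ncard_le_ncard hsub (Finset.finite_toSet _)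
  rw [Set.ncard_coe_finset, Nat.card_Ico] at hcard
  unfold renewalCount at h
  omega

variable [MeasurableSpace Ω] {P : Measure Ω}

lemma measureReal_sum_range_le_le [IsProbabilityMeasure P] (hmeas : ∀ n, Measurable (ξ n))
    (hnonneg : ∀ n, 0 ≤ᵐ[P] ξ n) (hindep : iIndepFun ξ P)
    (hident : ∀ n, IdentDistrib (ξ n) (ξ 0) P P) {θ : ℝ} (hθ : 0 ≤ θ) (n : ℕ) (T : ℝ) :
    P.real {ω | ∑ k ∈ Finset.range n, ξ k ω ≤ T} ≤ exp (θ * T) * mgf (ξ 0) P (-θ) ^ n := by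
  have hsum_nonneg : 0 ≤ᵐ[P] ∑ k ∈ Finset.range n, ξ k := by
    filter_upwards [ae_all_iff.mpr hnonneg] with ω hω
    simpa only [Finset.sum_apply, Pi.zero_apply] using Finset.sum_nonneg fun k _ => hω k
  have hchernoff := measure_le_le_exp_mul_mgf T (neg_nonpos.mpr hθ)
    (integrable_exp_mul_of_nonpos_of_nonneg (by fun_prop) hsum_nonneg (neg_nonpos.mpr hθ))
  rw [hindep.mgf_sum hmeas, Finset.prod_congr rfl fun k _ => mgf_congr_of_identDistrib _ _
    (hident k) (-θ), Finset.prod_const, Finset.card_range, neg_neg] at hchernoff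
  simpa only [Finset.sum_apply] using hchernoff

theorem exists_measureReal_le_renewalCount_le_exp [IsProbabilityMeasure P]
    (hmeas : ∀ n, Measurable (ξ n)) (hnonneg : ∀ n ω, 0 ≤ ξ n ω) (hindep : iIndepFun ξ P)
    (hident : ∀ n, IdentDistrib (ξ n) (ξ 0) P P) (hint : Integrable (ξ 0) P) {a' : ℝ}
    (ha' : 0 < a') (ha'a : a' < ∫ ω, ξ 0 ω ∂P) :
    ∃ c > 0, ∀ T > 0, P.real {ω | T / a' ≤ renewalCount ξ T ω} ≤ exp (-(c * T)) := by
  obtain ⟨b, ha'b, hb_mean⟩ := exists_between ha'a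
  obtain ⟨θ, hθ, hmgf⟩ :=
    exists_mgf_neg_le_exp_of_lt_integral (ae_of_all _ (hnonneg 0)) hint hb_mean
  have hb : 0 < b := ha'.trans ha'b
  refine ⟨θ * (b - a') / a', by have := sub_pos.mpr ha'b; positivity, fun T hT => ?_⟩
  set n := ⌈T / a'⌉₊
  have hn : 1 ≤ n := Nat.one_le_ceil_iff.mpr (by positivity)
  have hsub : {ω | T / a' ≤ renewalCount ξ T ω} ⊆ {ω | ∑ k ∈ Finset.range n, ξ k ω ≤ T} :=
    fun ω hω => sum_range_le_of_le_renewalCount (hnonneg · ω) hn (Nat.ceil_le.mpr hω)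
  have hexponent : θ * T + n * -(θ * b) ≤ -(θ * (b - a') / a' * T) := by
    have : θ * b * (T / a') ≤ θ * b * n := by gcongr; exact Nat.le_ceil (T / a')
    have : θ * b * (T / a') = θ * T + θ * (b - a') / a' * T := by field_simp; ring
    linarith
  calc P.real {ω | T / a' ≤ renewalCount ξ T ω}
      ≤ P.real {ω | ∑ k ∈ Finset.range n, ξ k ω ≤ T} := measureReal_mono hsub
    _ ≤ exp (θ * T) * mgf (ξ 0) P (-θ) ^ n := measureReal_sum_range_le_le hmeas
        (fun k => ae_of_all _ (hnonneg k)) hindep hident hθ.le n T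
    _ ≤ exp (θ * T) * exp (-(θ * b)) ^ n := by gcongr; exact mgf_nonneg
    _ = exp (θ * T + n * -(θ * b)) := by rw [exp_add, exp_nat_mul]
    _ ≤ exp (-(θ * (b - a') / a' * T)) := exp_le_exp.mpr hexponent

end Renewal

lemma tendsto_natCast_mul_exp_neg_mul_rpow {c δ : ℝ} (hc : 0 < c) (hδ : 0 < δ) :
    Tendsto (fun p : ℕ => (p : ℝ) * exp (-(c * (p : ℝ) ^ δ))) atTop (𝓝 0) := by
  have h := (tendsto_rpow_mul_exp_neg_mul_atTop_nhds_zero (1 / δ) c hc).comp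
    ((tendsto_rpow_atTop hδ).comp tendsto_natCast_atTop_atTop)
  refine h.congr fun p => ?_
  simp only [Function.comp_apply]
  rw [← rpow_mul (Nat.cast_nonneg p), mul_one_div_cancel hδ.ne', rpow_one, neg_mul]

theorem renewal_assumption_R2_general
    {Ω : Type*} [MeasureSpace Ω] [IsProbabilityMeasure (ℙ : Measure Ω)]
    (ξ : ℕ → Ω → ℝ)
    (hmeas : ∀ n, Measurable (ξ n))
    (hnonneg : ∀ n ω, 0 ≤ ξ n ω)
    (hindep : iIndepFun ξ ℙ)
    (hident : ∀ n, Measure.map (ξ n) ℙ = Measure.map (ξ 0) ℙ)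
    (hint : Integrable (ξ 0) ℙ)
    (a : ℝ) (hmean : (∫ ω, ξ 0 ω) = a)
    (μ : ℝ → Ω → ℕ)
    (hμ : ∀ t ω, μ t ω = Set.ncard {n : ℕ | 1 ≤ n ∧ ∑ k ∈ Finset.range n, ξ k ω ≤ t})
    (a' : ℝ) (ha'0 : 0 < a') (ha'a : a' < a)
    (x : ℝ) (hx : 0 < x)
    (v : ℕ → ℝ) (hv : ∀ p, 0 < v p)
    (hvp : ∃ δ > (0 : ℝ), ∀ᶠ p : ℕ in atTop, v p ≤ (p : ℝ) ^ (-δ)) :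
    Tendsto (fun p : ℕ =>
        (p : ℝ) * (ℙ {ω | 1 / a' ≤ v p * (μ (x / v p) ω : ℝ) / x}).toReal)
      atTop (nhds 0) := by
  obtain ⟨δ, hδ, hvδ⟩ := hvp
  obtain ⟨c, hc, hdev⟩ := exists_measureReal_le_renewalCount_le_exp hmeas hnonneg hindep
    (fun n => ⟨(hmeas n).aemeasurable, (hmeas 0).aemeasurable, hident n⟩) hint ha'0
    (hmean ▸ ha'a)
  have hμ : μ = renewalCount ξ := funext₂ hμ
  subst hμ
  refine squeeze_zero' (Eventually.of_forall fun p => by positivity) ?_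
    (tendsto_natCast_mul_exp_neg_mul_rpow (mul_pos hc hx) hδ)
  filter_upwards [hvδ, eventually_gt_atTop 0] with p hvδp hp
  have hvp := hv p
  have hpow : (p : ℝ) ^ δ ≤ 1 / v p := by
    rw [rpow_neg (Nat.cast_nonneg p)] at hvδp
    rw [le_one_div (by positivity) hvp]
    simpa [one_div] using hvδp
  have hevent : {ω | 1 / a' ≤ v p * (renewalCount ξ (x / v p) ω : ℝ) / x}
      = {ω | x / v p / a' ≤ renewalCount ξ (x / v p) ω} := by
    ext ω
    simp only [Set.mem_ofPred_eq]
    rw [div_le_div_iff₀ ha'0 hx, div_div, div_le_iff₀ (by positivity)]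
    constructor <;> intro h <;> linarith
  calc (p : ℝ) * (ℙ {ω | 1 / a' ≤ v p * (renewalCount ξ (x / v p) ω : ℝ) / x}).toReal
      ≤ p * exp (-(c * (x / v p))) := by
        rw [hevent]; gcongr; exact hdev _ (by positivity)
    _ ≤ p * exp (-(c * x * (p : ℝ) ^ δ)) := by
        rw [show c * (x / v p) = c * x * (1 / v p) by ring]
        gcongr

/-- For the renewal counting process `μ` of i.i.d. nonnegative random
variables with mean `a`, and any `a' ∈ (0,a)`, `x > 0`, and positive scaling constants
`v_p → 0` with `v_p ≤ p^{-δ}` eventually for some `δ > 0`, one has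
`p · P(v_p μ(x/v_p)/x ≥ 1/a') → 0` (Assumption R2 for a renewal process). -/
theorem renewal_assumption_R2
    {Ω : Type*} [MeasureSpace Ω] [IsProbabilityMeasure (ℙ : Measure Ω)]
    (ξ : ℕ → Ω → ℝ)
    (hmeas : ∀ n, Measurable (ξ n))
    (hnonneg : ∀ n ω, 0 ≤ ξ n ω)
    (hindep : iIndepFun ξ ℙ)
    (hident : ∀ n, Measure.map (ξ n) ℙ = Measure.map (ξ 0) ℙ)
    (hint : Integrable (ξ 0) ℙ)
    (a : ℝ) (ha : 0 < a) (hmean : (∫ ω, ξ 0 ω) = a)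
    (μ : ℝ → Ω → ℕ)
    (hμ : ∀ t ω, μ t ω = Set.ncard {n : ℕ | 1 ≤ n ∧ ∑ k ∈ Finset.range n, ξ k ω ≤ t})
    (a' : ℝ) (ha'0 : 0 < a') (ha'a : a' < a)
    (x : ℝ) (hx : 0 < x)
    (v : ℕ → ℝ) (hv : ∀ p, 0 < v p) (hv0 : Tendsto v atTop (nhds 0))
    (hvp : ∃ δ > (0 : ℝ), ∀ᶠ p : ℕ in atTop, v p ≤ (p : ℝ) ^ (-δ)) :
    Tendsto (fun p : ℕ =>
        (p : ℝ) * (ℙ {ω | 1 / a' ≤ v p * (μ (x / v p) ω : ℝ) / x}).toReal)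
      atTop (nhds 0) :=
  renewal_assumption_R2_general ξ hmeas hnonneg hindep hident hint a hmean μ hμ a' ha'0 ha'a x hx v
    hv hvp
end

section
/- Let ℓ* > 0 and for each t ≥ 0 let N_t be a Poisson random variable with mean ℓ*·t. Let a′ > 0 satisfy a′·ℓ* < 1, let x > 0, and let (v_p)_{p≥1} be positive reals with v_p → 0 such that for some δ > 0 one has v_p ≤ p^{−δ} for all sufficiently large p. Then p·P(N_{x/v_p} ≥ x/(a′·v_p)) → 0 as p → ∞. (This establishes Assumption R2 of the paper for any offspring point process dominated by a Poisson process of intensity ℓ*, for every a′ < 1/ℓ*.) -/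
/-! For `N` Poisson of mean `λ` and `c ≥ 1`, the exponential Chebyshev inequality with
`θ = log c` gives `P(N ≥ cλ) ≤ e^{-θcλ} E e^{θN} = exp (-(c log c - c + 1) λ)`, and the rate
`c log c - c + 1` is positive once `c > 1`. With `c = 1/(a'ℓ*)` and `λ = ℓ* x / v_p ≥ ℓ* x p^δ`,
the probability in question decays like `exp (-const · p^δ)`, which beats the factor `p`. -/

open MeasureTheory ProbabilityTheory Filter Real

lemma mul_log_sub_add_one_pos {c : ℝ} (hc : 1 < c) : 0 < c * log c - c + 1 := by
  have hc0 : 0 < c := zero_lt_one.trans hc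
  have h := log_lt_sub_one_of_pos (inv_pos.2 hc0) (inv_ne_one.2 hc.ne')
  rw [log_inv] at h
  have := mul_lt_mul_of_pos_left h hc0
  rw [mul_sub, mul_inv_cancel₀ hc0.ne'] at this
  linarith

lemma hasSum_exp_mul_poisson (lam θ : ℝ) :
    HasSum (fun k : ℕ => exp (θ * k) * (exp (-lam) * lam ^ k / k.factorial))
      (exp (lam * (exp θ - 1))) := by
  have h := (NormedSpace.expSeries_div_hasSum_exp (exp θ * lam)).mul_left (exp (-lam))
  rw [← exp_eq_exp_ℝ, ← exp_add] at h
  have hterm : (fun k : ℕ => exp (θ * k) * (exp (-lam) * lam ^ k / k.factorial))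
      = fun k => exp (-lam) * ((exp θ * lam) ^ k / k.factorial) := by
    funext k
    rw [mul_pow, ← exp_nat_mul, mul_comm (k : ℝ)]
    ring
  rwa [hterm, show lam * (exp θ - 1) = -lam + exp θ * lam by ring]

lemma measureReal_ge_le_exp_of_poisson {Ω : Type*} [MeasurableSpace Ω] {μ : Measure Ω}
    [IsFiniteMeasure μ] {N : Ω → ℕ} (hN : Measurable N) {lam : ℝ}
    (hpmf : ∀ k : ℕ, μ.real {ω | N ω = k} = exp (-lam) * lam ^ k / k.factorial)
    {θ : ℝ} (hθ : 0 ≤ θ) (a : ℝ) :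
    μ.real {ω | a ≤ N ω} ≤ exp (-θ * a + lam * (exp θ - 1)) := by
  set S : Set ℕ := {k | a ≤ k}
  have hsum : μ.real {ω | a ≤ N ω} = ∑' k, S.indicator (fun k => μ.real {ω | N ω = k}) k := by
    rw [measureReal_def, show {ω | a ≤ N ω} = N ⁻¹' S from rfl,
      ← tsum_measure_preimage_singleton S.to_countable
        (fun k _ => hN (measurableSet_singleton k)), tsum_subtype S (fun k => μ (N ⁻¹' {k})),
      ENNReal.tsum_toReal_eq
        (fun k => ne_top_of_le_ne_top (measure_ne_top μ _) (Set.indicator_le_self S _ k))]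
    exact congrArg tsum (S.indicator_comp_of_zero ENNReal.toReal_zero).symm
  have hmgf := (hasSum_exp_mul_poisson lam θ).mul_left (exp (-θ * a))
  rw [← exp_add] at hmgf
  have hterm : ∀ k : ℕ, S.indicator (fun k => μ.real {ω | N ω = k}) k
      ≤ exp (-θ * a) * (exp (θ * k) * (exp (-lam) * lam ^ k / k.factorial)) := by
    intro k
    rw [← mul_assoc, ← exp_add, ← hpmf]
    by_cases hk : a ≤ k
    · rw [Set.indicator_of_mem (show k ∈ S from hk)]
      exact le_mul_of_one_le_left measureReal_nonneg (one_le_exp (by nlinarith))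
    · rw [Set.indicator_of_notMem (show k ∉ S from hk)]
      positivity
  rw [hsum]
  exact hasSum_le hterm ((hmgf.summable.of_nonneg_of_le
    (fun k => Set.indicator_nonneg (fun _ _ => measureReal_nonneg) k) hterm).hasSum) hmgf

lemma measureReal_ge_mul_le_exp_of_poisson {Ω : Type*} [MeasurableSpace Ω] {μ : Measure Ω}
    [IsFiniteMeasure μ] {N : Ω → ℕ} (hN : Measurable N) {lam : ℝ}
    (hpmf : ∀ k : ℕ, μ.real {ω | N ω = k} = exp (-lam) * lam ^ k / k.factorial)
    {c : ℝ} (hc : 1 ≤ c) :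
    μ.real {ω | c * lam ≤ N ω} ≤ exp (-((c * log c - c + 1) * lam)) := by
  convert measureReal_ge_le_exp_of_poisson hN hpmf (log_nonneg hc) (c * lam) using 2
  rw [exp_log (zero_lt_one.trans_le hc)]
  ring

lemma tendsto_natCast_mul_exp_neg_of_rpow_le {u : ℕ → ℝ} {b δ : ℝ} (hb : 0 < b) (hδ : 0 < δ)
    (hu : ∀ᶠ p : ℕ in atTop, b * (p : ℝ) ^ δ ≤ u p) :
    Tendsto (fun p : ℕ => (p : ℝ) * exp (-u p)) atTop (nhds 0) := by
  have hlim : Tendsto (fun p : ℕ => ((p : ℝ) ^ δ) ^ δ⁻¹ * exp (-b * (p : ℝ) ^ δ)) atTop (nhds 0) :=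
    (tendsto_rpow_mul_exp_neg_mul_atTop_nhds_zero δ⁻¹ b hb).comp
      ((tendsto_rpow_atTop hδ).comp tendsto_natCast_atTop_atTop)
  refine squeeze_zero' (.of_forall fun p => by positivity) ?_ hlim
  filter_upwards [hu] with p hp
  rw [← rpow_mul p.cast_nonneg, mul_inv_cancel₀ hδ.ne', rpow_one]
  gcongr
  linarith

theorem poisson_assumption_R2_general
    {Ω : Type*} [MeasureSpace Ω] [IsProbabilityMeasure (ℙ : Measure Ω)]
    (lstar : ℝ) (hl : 0 < lstar)
    (N : ℝ → Ω → ℕ)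
    (hNmeas : ∀ t, Measurable (N t))
    (hN : ∀ t : ℝ, 0 ≤ t → ∀ k : ℕ,
      (ℙ {ω | N t ω = k}).toReal
        = Real.exp (-(lstar * t)) * (lstar * t) ^ k / (Nat.factorial k))
    (a' : ℝ) (ha' : 0 < a') (hal : a' * lstar < 1)
    (x : ℝ) (hx : 0 < x)
    (v : ℕ → ℝ) (hv : ∀ p, 0 < v p)
    (hvp : ∃ δ > (0 : ℝ), ∀ᶠ p : ℕ in atTop, v p ≤ (p : ℝ) ^ (-δ)) :
    Tendsto (fun p : ℕ =>
        (p : ℝ) * (ℙ {ω | x / (a' * v p) ≤ (N (x / v p) ω : ℝ)}).toReal)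
      atTop (nhds 0) := by
  obtain ⟨δ, hδ, hvδ⟩ := hvp
  set c := (a' * lstar)⁻¹
  have hc : 1 < c := (one_lt_inv₀ (mul_pos ha' hl)).2 hal
  set κ := c * log c - c + 1
  have hκ : 0 < κ := mul_log_sub_add_one_pos hc
  have htail : ∀ p, (ℙ {ω | x / (a' * v p) ≤ (N (x / v p) ω : ℝ)}).toReal
      ≤ exp (-(κ * (lstar * (x / v p)))) := by
    intro p
    have h := measureReal_ge_mul_le_exp_of_poisson (hNmeas _) (hN _ (div_pos hx (hv p)).le) hc.le
    rwa [show c * (lstar * (x / v p)) = x / (a' * v p) by simp only [c]; field_simp] at h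
  have hrate : ∀ᶠ p : ℕ in atTop, κ * lstar * x * (p : ℝ) ^ δ ≤ κ * (lstar * (x / v p)) := by
    filter_upwards [hvδ, eventually_gt_atTop 0] with p hvle hp
    have hpδ : (p : ℝ) ^ δ ≤ (v p)⁻¹ := by
      rw [le_inv_comm₀ (rpow_pos_of_pos (by exact_mod_cast hp) δ) (hv p), ← rpow_neg p.cast_nonneg]
      exact hvle
    calc κ * lstar * x * (p : ℝ) ^ δ ≤ κ * lstar * x * (v p)⁻¹ := by gcongr
      _ = κ * (lstar * (x / v p)) := by ring
  refine squeeze_zero (fun p => by positivity) (fun p => ?_)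
    (tendsto_natCast_mul_exp_neg_of_rpow_le (by positivity) hδ hrate)
  exact mul_le_mul_of_nonneg_left (htail p) p.cast_nonneg

/-- If `N t` is Poisson with mean `ℓ* · t`, `a' ℓ* < 1`, `x > 0` and
`v_p → 0` with `v_p ≤ p^{-δ}` eventually for some `δ > 0`, then
`p · P(N_{x/v_p} ≥ x/(a' v_p)) → 0` (Assumption R2 for a process dominated by a Poisson
process of intensity `ℓ*`). -/
theorem poisson_assumption_R2
    {Ω : Type*} [MeasureSpace Ω] [IsProbabilityMeasure (ℙ : Measure Ω)]
    (lstar : ℝ) (hl : 0 < lstar)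
    (N : ℝ → Ω → ℕ)
    (hNmeas : ∀ t, Measurable (N t))
    (hN : ∀ t : ℝ, 0 ≤ t → ∀ k : ℕ,
      (ℙ {ω | N t ω = k}).toReal
        = Real.exp (-(lstar * t)) * (lstar * t) ^ k / (Nat.factorial k))
    (a' : ℝ) (ha' : 0 < a') (hal : a' * lstar < 1)
    (x : ℝ) (hx : 0 < x)
    (v : ℕ → ℝ) (hv : ∀ p, 0 < v p) (hv0 : Tendsto v atTop (nhds 0))
    (hvp : ∃ δ > (0 : ℝ), ∀ᶠ p : ℕ in atTop, v p ≤ (p : ℝ) ^ (-δ)) :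
    Tendsto (fun p : ℕ =>
        (p : ℝ) * (ℙ {ω | x / (a' * v p) ≤ (N (x / v p) ω : ℝ)}).toReal)
      atTop (nhds 0) :=
  poisson_assumption_R2_general lstar hl N hNmeas hN a' ha' hal x hx v hv hvp
end

section
/- Let γ ∈ (1,2), let V be a positive random variable and (v_p)_{p≥1} positive reals with v_p → 0 such that p·P(V ≥ x/v_p) → x^{−γ} as p → ∞ for every x > 0. Let μ be a random nondecreasing right-continuous function from [0,∞) to [0,∞) with μ(0) = 0, independent of V, satisfying Assumption R1 (there is a ∈ (0,∞) with E|μ(t)/t − 1/a| → 0 as t → ∞) and Assumption R2 (p·P(v_p·μ(x/v_p)/x ≥ 1/a′) → 0 as p → ∞ for some a′ ∈ (0,a) and every x > 0). Then for every x > 0, p·P(μ(V) ≥ x/v_p) → (a·x)^{−γ} as p → ∞; in particular μ(V) is in the domain of attraction of a γ-stable distribution. -/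
/-!
Split according to whether `V` exceeds `c x / v_p`. By independence and monotonicity of `μ`,
`P(μ(V) ≥ x/v_p) ≥ P(V ≥ c x/v_p) · P(μ(c x/v_p) ≥ x/v_p)`, and conversely `P(μ(V) ≥ x/v_p)`
is at most `P(μ(a' x/v_p) ≥ x/v_p) + P(V ≥ a' x/v_p) · P(μ(c x/v_p) ≥ x/v_p) + P(V ≥ c x/v_p)`.
By R1 and Markov's inequality `μ(T)/T → 1/a` in probability, so `P(μ(c x/v_p) ≥ x/v_p)` tends
to `1` for `c > a` and to `0` for `c < a`, while R2 kills the first term of the upper bound.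
Multiplying by `p` and letting `c → a` gives `(a x)^{-γ}`.

R1 says nothing unless `μ(t)` is integrable, the Bochner integral being `0` otherwise. R2 at
`x = 1` gives `P(μ(t) > 1/(a' v_p)) ≤ 1/p` for large `p`, and Assumption V forces
`1/v_p = O(p^{1/β})` for every `β < γ`: if `1/v_q ≥ s/v_p` then
`1/q ≈ P(V ≥ 1/v_q) ≤ P(V ≥ s/v_p) ≈ s^{-γ}/p`, so `1/v` grows by at most a factor
`s = B^{1/β}` from `p` to `B p`. Hence `P(μ(t) > u) = O(u^{-β})` with `β > 1`.
-/

open MeasureTheory ProbabilityTheory Filter Topology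

theorem le_mul_rpow_of_le_on_blocks {u : ℕ → ℝ} (hu : ∀ p, 0 ≤ u p) {β : ℝ}
    (hβ : 0 < β) {B N : ℕ} (hB : 1 < B) (hN : 0 < N)
    (hstep : ∀ p q, N ≤ p → p ≤ q → q ≤ B * p → u q ≤ (B : ℝ) ^ β⁻¹ * u p)
    {q : ℕ} (hq : N ≤ q) :
    u q ≤ (B : ℝ) ^ β⁻¹ * u N * (q : ℝ) ^ β⁻¹ := by
  set s : ℝ := (B : ℝ) ^ β⁻¹
  have hNB : ∀ k, N ≤ N * B ^ k := fun k => Nat.le_mul_of_pos_right N (by positivity)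
  have hblock : ∀ k : ℕ, u (N * B ^ k) ≤ s ^ k * u N := by
    intro k
    induction k with
    | zero => simp
    | succ k ih =>
      calc u (N * B ^ (k + 1)) ≤ s * u (N * B ^ k) :=
            hstep _ _ (hNB k) (Nat.mul_le_mul_left _ (Nat.pow_le_pow_right hB.le k.le_succ))
              (le_of_eq (by ring))
        _ ≤ s * (s ^ k * u N) := by gcongr
        _ = s ^ (k + 1) * u N := by ring
  set k := Nat.log B (q / N)
  have hlow : N * B ^ k ≤ q :=
    mul_comm N _ ▸ (Nat.le_div_iff_mul_le hN).1 (Nat.pow_log_le_self B (Nat.div_pos hq hN).ne')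
  have hhigh : q ≤ B * (N * B ^ k) := by
    have := (Nat.div_lt_iff_lt_mul hN).1 (Nat.lt_pow_succ_log_self hB (q / N))
    rw [pow_succ] at this
    linarith
  have hsk : s ^ k ≤ (q : ℝ) ^ β⁻¹ := by
    calc s ^ k = ((B : ℝ) ^ k) ^ β⁻¹ := by
          rw [← Real.rpow_natCast, ← Real.rpow_mul (by positivity), mul_comm,
            Real.rpow_mul (by positivity), Real.rpow_natCast]
      _ ≤ (q : ℝ) ^ β⁻¹ := by
          gcongr
          exact_mod_cast (Nat.le_mul_of_pos_left _ hN).trans hlow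
  calc u q ≤ s * u (N * B ^ k) := hstep _ _ (hNB k) hlow hhigh
    _ ≤ s * (s ^ k * u N) := by gcongr; exact hblock k
    _ ≤ s * ((q : ℝ) ^ β⁻¹ * u N) := by gcongr; exact hu N
    _ = s * u N * (q : ℝ) ^ β⁻¹ := by ring

theorem exists_inv_le_mul_rpow_of_tendsto {G : ℝ → ℝ} (hG : Antitone G) {v : ℕ → ℝ}
    (hv : ∀ p, 0 < v p) {γ : ℝ}
    (hV : ∀ x > (0 : ℝ),
      Tendsto (fun p : ℕ => (p : ℝ) * G (x / v p)) atTop (𝓝 (x ^ (-γ))))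
    {β : ℝ} (hβ : 0 < β) (hβγ : β < γ) :
    ∃ C, ∀ᶠ p in atTop, (v p)⁻¹ ≤ C * (p : ℝ) ^ β⁻¹ := by
  obtain ⟨B, hB, hB4⟩ : ∃ B : ℕ, 1 < B ∧ 4 * (B : ℝ) ^ (1 - γ / β) < 1 := by
    have hlim : Tendsto (fun B : ℕ => 4 * (B : ℝ) ^ (1 - γ / β)) atTop (𝓝 (4 * 0)) := by
      have h := ((tendsto_rpow_neg_atTop (y := γ / β - 1) (by
        rw [sub_pos, one_lt_div hβ]; exact hβγ)).comp tendsto_natCast_atTop_atTop).const_mul 4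
      simpa only [Function.comp_def, neg_sub] using h
    obtain ⟨B, hB⟩ := ((hlim.eventually
      (eventually_lt_nhds (show (4 : ℝ) * 0 < 1 by norm_num))).and (eventually_gt_atTop 1)).exists
    exact ⟨B, hB.2, hB.1⟩
  set s : ℝ := (B : ℝ) ^ β⁻¹
  have hs : 0 < s := by positivity
  have hkey : 4 * (B * s ^ (-γ)) < 1 := by
    have hB0 : (0 : ℝ) < B := by positivity
    rwa [show 1 - γ / β = 1 + β⁻¹ * -γ by ring, Real.rpow_add hB0, Real.rpow_one,
      Real.rpow_mul hB0.le] at hB4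
  obtain ⟨N, hN⟩ := eventually_atTop.1 <|
    ((hV 1 one_pos).eventually (eventually_ge_nhds (by norm_num : (1 : ℝ) ^ (-γ) > 1 / 2))).and
      (((hV s hs).eventually (eventually_le_nhds (by
        linarith [Real.rpow_pos_of_pos hs (-γ)] : s ^ (-γ) < 2 * s ^ (-γ)))).and
      (eventually_ge_atTop 1))
  have hstep : ∀ p q, N ≤ p → p ≤ q → q ≤ B * p → (v q)⁻¹ ≤ s * (v p)⁻¹ := by
    intro p q hp hpq hqB
    -- otherwise `1/(2q) ≤ G(1/v_q) ≤ G(s/v_p) ≤ 2 s^{-γ}/p`, contradicting `hkey` as `q ≤ B p`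
    by_contra! h
    have hG' : G ((1 : ℝ) / v q) ≤ G (s / v p) :=
      hG (by rw [div_eq_mul_inv s, one_div]; exact h.le)
    obtain ⟨hq1, -, -⟩ := hN q (hp.trans hpq)
    obtain ⟨-, hp2, hp1⟩ := hN p hp
    have h1 : 1 / 2 ≤ (q : ℝ) * G (s / v p) :=
      hq1.trans (mul_le_mul_of_nonneg_left hG' (Nat.cast_nonneg _))
    have hqB' : (q : ℝ) ≤ B * p := by exact_mod_cast hqB
    have hp1' : (1 : ℝ) ≤ p := by exact_mod_cast hp1
    nlinarith [Real.rpow_pos_of_pos hs (-γ)]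
  refine ⟨s * (v N)⁻¹, (eventually_ge_atTop N).mono fun q hq => ?_⟩
  exact le_mul_rpow_of_le_on_blocks (fun p => (inv_pos.2 (hv p)).le) hβ hB
    (hN N le_rfl).2.2 hstep hq

theorem one_div_le_mul_div_mul_iff {a v x z : ℝ} (ha : 0 < a) (hv : 0 < v) (hx : 0 < x) :
    1 / a ≤ v * z / (a * x) ↔ x / v ≤ z := by
  rw [le_div_iff₀ (by positivity), div_le_iff₀' hv, one_div_mul_eq_div,
    mul_div_cancel_left₀ x ha.ne']

theorem tendsto_of_eventually_lt_of_continuousAt {ι : Type*} {l : Filter ι} {u : ι → ℝ}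
    {F : ℝ → ℝ} {a : ℝ} (hF : ContinuousAt F a)
    (hlow : ∀ᶠ c in 𝓝[>] a, ∀ b < F c, ∀ᶠ i in l, b < u i)
    (hup : ∀ᶠ c in 𝓝[<] a, ∀ b > F c, ∀ᶠ i in l, u i < b) :
    Tendsto u l (𝓝 (F a)) := by
  have hF' {s : Set ℝ} : Tendsto F (𝓝[s] a) (𝓝 (F a)) :=
    hF.tendsto.mono_left nhdsWithin_le_nhds
  refine tendsto_order.2 ⟨fun b hb => ?_, fun b hb => ?_⟩
  · obtain ⟨c, hc, hlowc⟩ := ((hF'.eventually (eventually_gt_nhds hb)).and hlow).exists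
    exact hlowc b hc
  · obtain ⟨c, hc, hupc⟩ := ((hF'.eventually (eventually_lt_nhds hb)).and hup).exists
    exact hupc b hc

section Probability

variable {Ω : Type*} [MeasurableSpace Ω] {P : Measure Ω}

theorem tendsto_measureReal_le_abs_of_tendsto_integral_abs {ι : Type*} {l : Filter ι}
    {f : ι → Ω → ℝ} (hf : ∀ i, Integrable (f i) P)
    (h : Tendsto (fun i => ∫ ω, |f i ω| ∂P) l (𝓝 0)) {δ : ℝ} (hδ : 0 < δ) :
    Tendsto (fun i => P.real {ω | δ ≤ |f i ω|}) l (𝓝 0) := by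
  refine squeeze_zero (fun _ => measureReal_nonneg) (fun i => ?_) (by simpa using h.div_const δ)
  rw [le_div_iff₀' hδ]
  exact mul_meas_ge_le_integral_of_nonneg (ae_of_all _ fun ω => abs_nonneg _) (hf i).abs δ

section Tail

variable [IsFiniteMeasure P]

theorem integrable_of_measureReal_lt_le_rpow {X : Ω → ℝ} (hXm : AEStronglyMeasurable X P)
    (hX0 : 0 ≤ᵐ[P] X) {β K : ℝ} (hβ : 1 < β)
    (htail : ∀ᶠ u in atTop, P.real {ω | u < X ω} ≤ K * u ^ (-β)) : Integrable X P := by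
  obtain ⟨u₁, hu₁⟩ := eventually_atTop.1 (htail.and (eventually_gt_atTop 0))
  have hu₁0 : 0 < u₁ := (hu₁ u₁ le_rfl).2
  refine ⟨hXm, ?_⟩
  rw [hasFiniteIntegral_iff_ofReal hX0, lintegral_eq_lintegral_meas_lt P hX0 hXm.aemeasurable,
    ← Set.Ioc_union_Ioi_eq_Ioi hu₁0.le,
    lintegral_union measurableSet_Ioi Set.Ioc_disjoint_Ioi_same]
  refine ENNReal.add_lt_top.2 ⟨setLIntegral_lt_top_of_le_nnreal (by simp)
    ⟨(P Set.univ).toNNReal, fun u _ => ?_⟩, ?_⟩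
  · rw [ENNReal.coe_toNNReal (measure_ne_top P _)]
    exact measure_mono (Set.subset_univ _)
  · refine (setLIntegral_mono (g := fun u => ENNReal.ofReal (K * u ^ (-β))) (by fun_prop)
      fun u hu => ?_).trans_lt
      ((integrableOn_Ioi_rpow_of_lt (by linarith) hu₁0).const_mul K).lintegral_lt_top
    rw [← ofReal_measureReal]
    exact ENNReal.ofReal_le_ofReal (hu₁ u (le_of_lt hu)).1

theorem integrable_of_measureReal_lt_le_inv {X : Ω → ℝ} (hXm : AEStronglyMeasurable X P)
    (hX0 : 0 ≤ᵐ[P] X) {w : ℕ → ℝ} {β C : ℝ} (hβ : 1 < β)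
    (hw : ∀ᶠ p in atTop, w p ≤ C * (p : ℝ) ^ β⁻¹)
    (htail : ∀ᶠ p : ℕ in atTop, (p : ℝ) * P.real {ω | w p < X ω} ≤ 1) :
    Integrable X P := by
  obtain ⟨C, hC, hw⟩ : ∃ C > 0, ∀ᶠ p in atTop, w p ≤ C * (p : ℝ) ^ β⁻¹ :=
    ⟨max C 1, by positivity, hw.mono fun p hp => hp.trans (by gcongr; exact le_max_left _ _)⟩
  have hpow : Tendsto (fun u : ℝ => (u / C) ^ β) atTop atTop :=
    (tendsto_rpow_atTop (by linarith)).comp (tendsto_id.atTop_div_const hC)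
  set p : ℝ → ℕ := fun u => ⌊(u / C) ^ β⌋₊
  have hp : Tendsto p atTop atTop := tendsto_nat_floor_atTop.comp hpow
  refine integrable_of_measureReal_lt_le_rpow hXm hX0 (K := 2 * C ^ β) hβ ?_
  filter_upwards [hp.eventually hw, hp.eventually htail, hpow.eventually_ge_atTop 2,
    eventually_gt_atTop 0] with u hwu htu h2 hu
  have hup : (p u : ℝ) ≤ (u / C) ^ β := Nat.floor_le (by positivity)
  have hlow : (u / C) ^ β / 2 ≤ p u := by
    have := Nat.lt_floor_add_one ((u / C) ^ β)
    linarith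
  have hp0 : (0 : ℝ) < p u := by linarith
  have hwp : w (p u) ≤ u := calc
    w (p u) ≤ C * (p u : ℝ) ^ β⁻¹ := hwu
    _ ≤ C * ((u / C) ^ β) ^ β⁻¹ := by gcongr
    _ = u := by rw [Real.rpow_rpow_inv (by positivity) (by linarith)]; field_simp
  calc P.real {ω | u < X ω} ≤ P.real {ω | w (p u) < X ω} :=
        measureReal_mono fun ω (hω : u < X ω) => hwp.trans_lt hω
    _ ≤ 1 / p u := by rw [le_div_iff₀ hp0]; linarith
    _ ≤ 2 / (u / C) ^ β := by rw [div_le_div_iff₀ hp0 (by positivity)]; linarith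
    _ = 2 * C ^ β * u ^ (-β) := by
        rw [Real.div_rpow hu.le hC.le, Real.rpow_neg hu.le]; field_simp

theorem integrable_apply_of_tendsto_mul_measureReal {μ : Ω → ℝ → ℝ}
    (hμmeas : ∀ t, Measurable fun ω => μ ω t) (hμmono : ∀ ω, Monotone (μ ω))
    (hμnonneg : ∀ ω t, 0 ≤ μ ω t) {v : ℕ → ℝ} (hv : ∀ p, 0 < v p)
    (hvinv : Tendsto (fun p => (v p)⁻¹) atTop atTop) {β C : ℝ} (hβ : 1 < β)
    (hC : ∀ᶠ p in atTop, (v p)⁻¹ ≤ C * (p : ℝ) ^ β⁻¹) {a' : ℝ} (ha' : 0 < a')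
    (hR2 : Tendsto (fun p : ℕ => (p : ℝ) * P.real {ω | 1 / a' ≤ v p * μ ω (1 / v p)})
      atTop (𝓝 0)) (t : ℝ) :
    Integrable (fun ω => μ ω t) P := by
  refine integrable_of_measureReal_lt_le_inv (w := fun p => (a' * v p)⁻¹) (C := a'⁻¹ * C)
    (hμmeas t).aestronglyMeasurable (ae_of_all _ fun ω => hμnonneg ω t) hβ ?_ ?_
  · filter_upwards [hC] with p hp
    rw [mul_inv, mul_assoc]
    exact mul_le_mul_of_nonneg_left hp (inv_nonneg.2 ha'.le)
  · filter_upwards [hR2.eventually (eventually_le_nhds one_pos), hvinv.eventually_ge_atTop t]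
      with p hp ht
    refine le_trans (mul_le_mul_of_nonneg_left (measureReal_mono fun ω hlt => ?_)
      (Nat.cast_nonneg p)) hp
    have hω : (a' * v p)⁻¹ ≤ μ ω (1 / v p) :=
      (le_of_lt hlt).trans (hμmono ω (by rwa [one_div]))
    calc 1 / a' = v p * (a' * v p)⁻¹ := by field_simp [(hv p).ne']
      _ ≤ v p * μ ω (1 / v p) := mul_le_mul_of_nonneg_left hω (hv p).le

end Tail

section RandomFunction

variable {μ : Ω → ℝ → ℝ}

section Concentration

variable [IsProbabilityMeasure P] {m : ℝ}
  (hconc : ∀ δ > 0, Tendsto (fun T => P.real {ω | δ ≤ |μ ω T / T - m|}) atTop (𝓝 0))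
include hconc

theorem tendsto_measureReal_mul_le_apply_of_lt {r : ℝ} (hr : r < m) :
    Tendsto (fun T => P.real {ω | r * T ≤ μ ω T}) atTop (𝓝 1) := by
  refine tendsto_of_tendsto_of_tendsto_of_le_of_le'
    (by simpa only [sub_zero] using (hconc _ (sub_pos.2 hr)).const_sub 1)
    tendsto_const_nhds ?_ (Eventually.of_forall fun _ => measureReal_le_one)
  filter_upwards [eventually_gt_atTop 0] with T hT
  have hcover : {ω | r * T ≤ μ ω T} ∪ {ω | m - r ≤ |μ ω T / T - m|} = Set.univ := by
    refine Set.eq_univ_of_forall fun ω => or_iff_not_imp_right.2 fun h => ?_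
    have h' : |μ ω T / T - m| < m - r := not_le.1 h
    have : r < μ ω T / T := by linarith [(abs_lt.1 h').1]
    exact ((lt_div_iff₀ hT).1 this).le
  have := measureReal_union_le (μ := P) {ω | r * T ≤ μ ω T} {ω | m - r ≤ |μ ω T / T - m|}
  rw [hcover, probReal_univ] at this
  linarith

theorem tendsto_measureReal_mul_le_apply_of_gt {r : ℝ} (hr : m < r) :
    Tendsto (fun T => P.real {ω | r * T ≤ μ ω T}) atTop (𝓝 0) := by
  refine squeeze_zero' (Eventually.of_forall fun _ => measureReal_nonneg) ?_
    (hconc _ (sub_pos.2 hr))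
  filter_upwards [eventually_gt_atTop 0] with T hT
  refine measureReal_mono fun ω (hω : r * T ≤ μ ω T) => ?_
  have : r ≤ μ ω T / T := by rwa [le_div_iff₀ hT]
  exact (sub_le_sub_right this m).trans (le_abs_self _)

end Concentration

section Subordination

variable {V : Ω → ℝ} (hindep : IndepFun V μ P) (hμ : ∀ ω, Monotone (μ ω))
include hindep

theorem ProbabilityTheory.IndepFun.measureReal_inter_eq_mul_apply (s r t : ℝ) :
    P.real ({ω | s ≤ V ω} ∩ {ω | r ≤ μ ω t}) =
      P.real {ω | s ≤ V ω} * P.real {ω | r ≤ μ ω t} := by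
  have h := (hindep.comp measurable_id (measurable_pi_apply t)).measure_inter_preimage_eq_mul
    (s := Set.Ici s) (t := Set.Ici r) measurableSet_Ici measurableSet_Ici
  simp only [Measure.real, ← ENNReal.toReal_mul]
  exact congrArg ENNReal.toReal h

include hμ

section FiniteMeasure

variable [IsFiniteMeasure P]

theorem ProbabilityTheory.IndepFun.measureReal_mul_le_measureReal_comp (T y : ℝ) :
    P.real {ω | T ≤ V ω} * P.real {ω | y ≤ μ ω T} ≤
      P.real {ω | y ≤ μ ω (V ω)} := by
  rw [← hindep.measureReal_inter_eq_mul_apply]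
  exact measureReal_mono fun ω ⟨hV, hy⟩ => hy.trans (hμ ω hV)

theorem ProbabilityTheory.IndepFun.measureReal_comp_le_add (S T y : ℝ) :
    P.real {ω | y ≤ μ ω (V ω)} ≤ P.real {ω | y ≤ μ ω S} +
      P.real {ω | S ≤ V ω} * P.real {ω | y ≤ μ ω T} + P.real {ω | T ≤ V ω} := by
  have hsub : {ω | y ≤ μ ω (V ω)} ⊆
      ({ω | y ≤ μ ω S} ∪ ({ω | S ≤ V ω} ∩ {ω | y ≤ μ ω T})) ∪
        {ω | T ≤ V ω} := by
    intro ω (hω : y ≤ μ ω (V ω))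
    rcases le_or_gt T (V ω) with hT | hT
    · exact Or.inr hT
    rcases le_or_gt S (V ω) with hS | hS
    · exact Or.inl (Or.inr ⟨hS, hω.trans (hμ ω hT.le)⟩)
    · exact Or.inl (Or.inl (hω.trans (hμ ω hS.le)))
  rw [← hindep.measureReal_inter_eq_mul_apply]
  exact (measureReal_mono hsub).trans
    ((measureReal_union_le _ _).trans (add_le_add (measureReal_union_le _ _) le_rfl))

end FiniteMeasure

variable [IsProbabilityMeasure P] {m : ℝ}
  (hconc : ∀ δ > 0, Tendsto (fun T => P.real {ω | δ ≤ |μ ω T / T - m|}) atTop (𝓝 0))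
  {ι : Type*} {l : Filter ι} {n y : ι → ℝ} (hn : ∀ i, 0 ≤ n i) (hy : Tendsto y l atTop)
include hconc hn hy

theorem ProbabilityTheory.IndepFun.eventually_lt_mul_measureReal_comp {c L : ℝ} (hc : 0 < c)
    (hcm : c⁻¹ < m) (hV : Tendsto (fun i => n i * P.real {ω | c * y i ≤ V ω}) l (𝓝 L)) :
    ∀ b < L, ∀ᶠ i in l, b < n i * P.real {ω | y i ≤ μ ω (V ω)} := by
  have hμT : Tendsto (fun i => P.real {ω | y i ≤ μ ω (c * y i)}) l (𝓝 1) := by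
    refine ((tendsto_measureReal_mul_le_apply_of_lt hconc hcm).comp
      (hy.const_mul_atTop hc)).congr fun i => ?_
    simp only [Function.comp_apply, inv_mul_cancel_left₀ hc.ne']
  intro b hb
  filter_upwards [(hV.mul hμT).eventually (eventually_gt_nhds (by rwa [mul_one]))] with i hi
  refine hi.trans_le ?_
  rw [mul_assoc]
  exact mul_le_mul_of_nonneg_left (hindep.measureReal_mul_le_measureReal_comp hμ _ _) (hn i)

theorem ProbabilityTheory.IndepFun.eventually_mul_measureReal_comp_lt {c L L' : ℝ}
    {S : ι → ℝ} (hc : 0 < c) (hcm : m < c⁻¹)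
    (hS : Tendsto (fun i => n i * P.real {ω | y i ≤ μ ω (S i)}) l (𝓝 0))
    (hVS : Tendsto (fun i => n i * P.real {ω | S i ≤ V ω}) l (𝓝 L'))
    (hV : Tendsto (fun i => n i * P.real {ω | c * y i ≤ V ω}) l (𝓝 L)) :
    ∀ b > L, ∀ᶠ i in l, n i * P.real {ω | y i ≤ μ ω (V ω)} < b := by
  have hμT : Tendsto (fun i => P.real {ω | y i ≤ μ ω (c * y i)}) l (𝓝 0) := by
    refine ((tendsto_measureReal_mul_le_apply_of_gt hconc hcm).comp
      (hy.const_mul_atTop hc)).congr fun i => ?_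
    simp only [Function.comp_apply, inv_mul_cancel_left₀ hc.ne']
  intro b hb
  have hlim := (hS.add (hVS.mul hμT)).add hV
  rw [mul_zero, zero_add, zero_add] at hlim
  filter_upwards [hlim.eventually (eventually_lt_nhds hb)] with i hi
  refine lt_of_le_of_lt ?_ hi
  calc n i * P.real {ω | y i ≤ μ ω (V ω)}
      ≤ n i * (P.real {ω | y i ≤ μ ω (S i)} + P.real {ω | S i ≤ V ω} *
          P.real {ω | y i ≤ μ ω (c * y i)} + P.real {ω | c * y i ≤ V ω}) :=
        mul_le_mul_of_nonneg_left (hindep.measureReal_comp_le_add hμ _ _ _) (hn i)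
    _ = _ := by ring

end Subordination

end RandomFunction

end Probability

theorem tail_mu_V_general
    {Ω : Type*} [MeasureSpace Ω] [IsProbabilityMeasure (ℙ : Measure Ω)]
    (γ : ℝ) (hγ : γ ∈ Set.Ioo (1 : ℝ) 2)
    (V : Ω → ℝ)
    (v : ℕ → ℝ) (hv : ∀ p, 0 < v p) (hv0 : Tendsto v atTop (nhds 0))
    (hV : ∀ x > (0 : ℝ), Tendsto (fun p : ℕ =>
        (p : ℝ) * (ℙ {ω | x / v p ≤ V ω}).toReal) atTop (nhds (x ^ (-γ))))
    (μ : Ω → ℝ → ℝ)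
    (hμmeas : ∀ t, Measurable fun ω => μ ω t)
    (hμmono : ∀ ω, Monotone (μ ω))
    (hμnonneg : ∀ ω t, 0 ≤ μ ω t)
    (hindep : IndepFun V μ ℙ)
    (a : ℝ) (ha : 0 < a)
    (hR1 : Tendsto (fun t : ℝ => ∫ ω, |μ ω t / t - 1 / a|) atTop (nhds 0))
    (a' : ℝ) (ha' : a' ∈ Set.Ioo (0 : ℝ) a)
    (hR2 : ∀ x > (0 : ℝ), Tendsto (fun p : ℕ =>
        (p : ℝ) * (ℙ {ω | 1 / a' ≤ v p * μ ω (x / v p) / x}).toReal) atTop (nhds 0)) :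
    ∀ x > (0 : ℝ), Tendsto (fun p : ℕ =>
        (p : ℝ) * (ℙ {ω | x / v p ≤ μ ω (V ω)}).toReal)
      atTop (nhds ((a * x) ^ (-γ))) := by
  intro x hx
  obtain ⟨hγ1, -⟩ := hγ
  obtain ⟨ha'0, -⟩ := ha'
  have hvinv : Tendsto (fun p => (v p)⁻¹) atTop atTop :=
    (tendsto_nhdsWithin_iff.2 ⟨hv0, Eventually.of_forall hv⟩).inv_tendsto_nhdsGT_zero
  have hy : Tendsto (fun p => x / v p) atTop atTop := by
    simpa only [div_eq_mul_inv] using hvinv.const_mul_atTop hx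
  have hV' : ∀ c > 0,
      Tendsto (fun p : ℕ => (p : ℝ) * (ℙ {ω | c * (x / v p) ≤ V ω}).toReal) atTop
        (𝓝 ((c * x) ^ (-γ))) := fun c hc => by
    simpa only [mul_div_assoc] using hV (c * x) (by positivity)
  obtain ⟨C, hC⟩ := exists_inv_le_mul_rpow_of_tendsto
    (fun y z hyz => measureReal_mono fun ω (h : z ≤ V ω) => hyz.trans h) hv hV
    (β := (1 + γ) / 2) (by linarith) (by linarith)
  have hint := integrable_apply_of_tendsto_mul_measureReal hμmeas hμmono hμnonneg hv hvinv
    (by linarith) hC ha'0 (by simpa only [div_one, ← measureReal_def] using hR2 1 one_pos)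
  have hconc := fun δ (hδ : 0 < δ) => tendsto_measureReal_le_abs_of_tendsto_integral_abs
    (fun T => ((hint T).div_const T).sub (integrable_const (1 / a))) hR1 hδ
  refine tendsto_of_eventually_lt_of_continuousAt (F := fun c => (c * x) ^ (-γ))
    ((continuousAt_id.mul continuousAt_const).rpow_const (Or.inl (mul_pos ha hx).ne')) ?_ ?_
  · filter_upwards [self_mem_nhdsWithin] with c (hc : a < c)
    exact hindep.eventually_lt_mul_measureReal_comp hμmono hconc (fun p => Nat.cast_nonneg p) hy
      (ha.trans hc) (by rw [one_div]; exact inv_strictAnti₀ ha hc) (hV' c (ha.trans hc))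
  · filter_upwards [Ioo_mem_nhdsLT ha] with c ⟨hc0, hca⟩
    have hS : Tendsto (fun p : ℕ => (p : ℝ) * (ℙ {ω | x / v p ≤ μ ω (a' * (x / v p))}).toReal)
        atTop (𝓝 0) := by
      refine (hR2 (a' * x) (by positivity)).congr fun p => ?_
      simp_rw [one_div_le_mul_div_mul_iff ha'0 (hv p) hx, mul_div_assoc]
    exact hindep.eventually_mul_measureReal_comp_lt hμmono hconc (fun p => Nat.cast_nonneg p) hy
      hc0 (by rw [one_div]; exact inv_strictAnti₀ hc0 hca) hS (hV' a' ha'0) (hV' c hc0)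

/-- Lemma `lemma:DA-mu(V)` of the paper. Under Assumptions V, R1 and R2,
`p · P(μ(V) ≥ x/v_p) → (a x)^{-γ}` for every `x > 0`. -/
theorem tail_mu_V
    {Ω : Type*} [MeasureSpace Ω] [IsProbabilityMeasure (ℙ : Measure Ω)]
    (γ : ℝ) (hγ : γ ∈ Set.Ioo (1 : ℝ) 2)
    (V : Ω → ℝ) (hVmeas : Measurable V) (hVpos : ∀ ω, 0 < V ω)
    (v : ℕ → ℝ) (hv : ∀ p, 0 < v p) (hv0 : Tendsto v atTop (nhds 0))
    (hV : ∀ x > (0 : ℝ), Tendsto (fun p : ℕ =>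
        (p : ℝ) * (ℙ {ω | x / v p ≤ V ω}).toReal) atTop (nhds (x ^ (-γ))))
    (μ : Ω → ℝ → ℝ)
    (hμmeas : ∀ t, Measurable fun ω => μ ω t)
    (hμmono : ∀ ω, Monotone (μ ω))
    (hμrc : ∀ ω t, ContinuousWithinAt (μ ω) (Set.Ici t) t)
    (hμ0 : ∀ ω, μ ω 0 = 0)
    (hμnonneg : ∀ ω t, 0 ≤ μ ω t)
    (hindep : IndepFun V μ ℙ)
    (a : ℝ) (ha : 0 < a)
    (hR1 : Tendsto (fun t : ℝ => ∫ ω, |μ ω t / t - 1 / a|) atTop (nhds 0))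
    (a' : ℝ) (ha' : a' ∈ Set.Ioo (0 : ℝ) a)
    (hR2 : ∀ x > (0 : ℝ), Tendsto (fun p : ℕ =>
        (p : ℝ) * (ℙ {ω | 1 / a' ≤ v p * μ ω (x / v p) / x}).toReal) atTop (nhds 0)) :
    ∀ x > (0 : ℝ), Tendsto (fun p : ℕ =>
        (p : ℝ) * (ℙ {ω | x / v p ≤ μ ω (V ω)}).toReal)
      atTop (nhds ((a * x) ^ (-γ))) :=
  tail_mu_V_general γ hγ V v hv hv0 hV μ hμmeas hμmono hμnonneg hindep a ha hR1 a' ha' hR2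
end

section
/- Let X be a nonnegative random variable and let U be uniformly distributed on [0,1] and independent of X. Then for every x ≥ 0, E[X·1{U·X ≥ x}] = ∫_x^∞ P(X ≥ u) du (both sides possibly infinite). -/
/-!
Conditionally on `X = t ≥ 0`, the event `U t ≥ x` has probability `(1 - x / t)⁺`, so by
independence the left-hand side is `E[(X - x)⁺]`. The layer-cake formula writes this as
`∫_0^∞ P(X - x ≥ s) ds`, which is the right-hand side after the shift `u = s + x`.
-/

open MeasureTheory ProbabilityTheory Filter Set
open scoped ENNReal

theorem lintegral_comp_eq_lintegral_map_lintegral_map_of_indepFun {Ω α β : Type*}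
    [MeasurableSpace Ω] [MeasurableSpace α] [MeasurableSpace β]
    {μ : Measure Ω} [IsFiniteMeasure μ] {X : Ω → α} {Y : Ω → β}
    (hX : Measurable X) (hY : Measurable Y) (hXY : IndepFun X Y μ)
    {g : α × β → ℝ≥0∞} (hg : Measurable g) :
    ∫⁻ ω, g (X ω, Y ω) ∂μ = ∫⁻ a, ∫⁻ b, g (a, b) ∂(μ.map Y) ∂(μ.map X) := by
  rw [← lintegral_map hg (hX.prodMk hY),
    (indepFun_iff_map_prod_eq_prod_map_map hX.aemeasurable hY.aemeasurable).1 hXY,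
    lintegral_prod _ hg.aemeasurable]

theorem setLIntegral_Icc_zero_one_indicator_le_mul {x t : ℝ} (hx : 0 ≤ x) (ht : 0 ≤ t) :
    ∫⁻ u in Icc 0 1, {u | x ≤ u * t}.indicator (fun _ ↦ ENNReal.ofReal t) u
      = ENNReal.ofReal (t - x) := by
  have hmeas : MeasurableSet {u : ℝ | x ≤ u * t} :=
    measurableSet_le measurable_const (measurable_id.mul_const t)
  rw [lintegral_indicator hmeas, setLIntegral_const, Measure.restrict_apply hmeas]
  rcases ht.eq_or_lt with rfl | htpos
  · simp [hx]
  · have hsect : {u | x ≤ u * t} ∩ Icc 0 1 = Icc (x / t) 1 := by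
      ext u
      simp only [mem_inter_iff, mem_ofPred_eq, mem_Icc, div_le_iff₀ htpos]
      constructor
      · rintro ⟨hxu, -, hu1⟩
        exact ⟨hxu, hu1⟩
      · rintro ⟨hxu, hu1⟩
        exact ⟨hxu, by nlinarith, hu1⟩
    rw [hsect, Real.volume_Icc, ← ENNReal.ofReal_mul ht, mul_sub, mul_one,
      mul_div_cancel₀ x htpos.ne']

theorem setLIntegral_le_mul_eq_lintegral_ofReal_sub {Ω : Type*} [MeasurableSpace Ω]
    {μ : Measure Ω} [IsFiniteMeasure μ] {X U : Ω → ℝ} (hX : Measurable X) (hX0 : ∀ ω, 0 ≤ X ω)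
    (hU : Measurable U) (hUlaw : μ.map U = volume.restrict (Icc 0 1)) (hXU : IndepFun X U μ)
    {x : ℝ} (hx : 0 ≤ x) :
    ∫⁻ ω in {ω | x ≤ U ω * X ω}, ENNReal.ofReal (X ω) ∂μ
      = ∫⁻ ω, ENNReal.ofReal (X ω - x) ∂μ := by
  have hS : MeasurableSet {p : ℝ × ℝ | x ≤ p.2 * p.1} :=
    measurableSet_le measurable_const (measurable_snd.mul measurable_fst)
  have hg : Measurable ({p : ℝ × ℝ | x ≤ p.2 * p.1}.indicator fun p ↦ ENNReal.ofReal p.1) :=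
    (ENNReal.measurable_ofReal.comp measurable_fst).indicator hS
  have hA : MeasurableSet {ω | x ≤ U ω * X ω} := hS.preimage (hX.prodMk hU)
  have hX0' : ∀ᵐ t ∂μ.map X, 0 ≤ t :=
    (ae_map_iff hX.aemeasurable measurableSet_Ici).2 (Eventually.of_forall hX0)
  rw [← lintegral_indicator hA,
    ← lintegral_map (f := fun t ↦ ENNReal.ofReal (t - x)) (by fun_prop) hX]
  refine (lintegral_comp_eq_lintegral_map_lintegral_map_of_indepFun hX hU hXU hg).trans ?_
  rw [hUlaw]
  refine lintegral_congr_ae ?_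
  filter_upwards [hX0'] with t ht
  exact setLIntegral_Icc_zero_one_indicator_le_mul hx ht

theorem lintegral_ofReal_sub_eq_setLIntegral_Ioi_meas_le {α : Type*} [MeasurableSpace α]
    (μ : Measure α) {f : α → ℝ} (hf : AEMeasurable f μ) (x : ℝ) :
    ∫⁻ ω, ENNReal.ofReal (f ω - x) ∂μ = ∫⁻ u in Ioi x, μ {ω | u ≤ f ω} := by
  have hpos : ∀ ω, ENNReal.ofReal (f ω - x) = ENNReal.ofReal (max (f ω - x) 0) := by
    simp
  have hlevel : ∀ t ∈ Ioi (0 : ℝ), μ {ω | t ≤ max (f ω - x) 0} = μ {ω | t + x ≤ f ω} := by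
    intro t ht
    congr 1
    ext ω
    simp only [mem_ofPred_eq, le_max_iff, not_le.2 (mem_Ioi.1 ht), or_false, le_sub_iff_add_le]
  rw [lintegral_congr hpos, lintegral_eq_lintegral_meas_le (f := fun ω ↦ max (f ω - x) 0) μ
      (Eventually.of_forall fun ω ↦ le_max_right _ _) ((hf.sub_const x).max aemeasurable_const),
    setLIntegral_congr_fun measurableSet_Ioi hlevel,
    ← (measurePreserving_add_right volume x).setLIntegral_comp_preimage_emb
      (measurableEmbedding_addRight x) (fun u ↦ μ {ω | u ≤ f ω}) (Ioi x)]
  simp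

/-- identity `eq:id` of the paper. If `X ≥ 0` and `U` is uniform on
`[0,1]` independent of `X`, then `E[X; UX ≥ x] = ∫_x^∞ P(X ≥ u) du` for every `x ≥ 0`
(both sides possibly infinite, so stated with Lebesgue integrals in `ℝ≥0∞`). -/
theorem size_biased_uniform_identity
    {Ω : Type*} [MeasureSpace Ω] [IsProbabilityMeasure (ℙ : Measure Ω)]
    (X : Ω → ℝ) (hXmeas : Measurable X) (hXnonneg : ∀ ω, 0 ≤ X ω)
    (U : Ω → ℝ) (hUmeas : Measurable U)
    (hUlaw : Measure.map U ℙ = (volume : Measure ℝ).restrict (Set.Icc 0 1))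
    (hindep : IndepFun X U ℙ)
    (x : ℝ) (hx : 0 ≤ x) :
    ∫⁻ ω in {ω | x ≤ U ω * X ω}, ENNReal.ofReal (X ω) ∂ℙ
      = ∫⁻ u in Set.Ioi x, ℙ {ω | u ≤ X ω} := by
  rw [setLIntegral_le_mul_eq_lintegral_ofReal_sub hXmeas hXnonneg hUmeas hUlaw hindep hx,
    lintegral_ofReal_sub_eq_setLIntegral_Ioi_meas_le _ hXmeas.aemeasurable]
end

section
/- Let V be a positive random variable and μ a random nondecreasing right-continuous function from [0,∞) to ℕ with μ(0) = 0, and set A(n) = inf{t ≥ 0 : μ(t) ≥ n} for n ∈ ℕ (so A(0) = 0). Let U be uniform on [0,1], independent of the pair (V, μ), and set Ẑ = ⌊U·μ(V)⌋ and R̂ = A(Ẑ). Then for every measurable f : (0,∞) × ℕ × [0,∞] → [0,∞], E[μ(V)·f(V, Ẑ, R̂)] = Σ_{x ≥ 1} Σ_{z ≥ 0} E[f(V, z, A(z))·1{μ(V) = x + z}]. (This identifies the law of (V, Ẑ, R̂) under the offspring-biased measure P̂ with Radon–Nikodym derivative μ(V), which by the paper's Lemma equals the law of the lifetime, ladder height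 and ladder location triple (V_{T(1)−1}, 𝒵(1), R(1)) of the Lukasiewicz path.) -/
/-!
Given `(V, μ)`, the index `⌊U μ(V)⌋` is uniform on `{0, …, μ(V) - 1}`, so independence and
Fubini turn the left side into `E[∑_{z < μ(V)} f(V, z, A z)]`. On the right, for fixed `z` the
events `{μ(V) = x + 1 + z}`, `x ≥ 0`, partition `{z < μ(V)}`, which gives the same expectation.
-/

open MeasureTheory ProbabilityTheory Set
open scoped ENNReal

theorem setLIntegral_Ico_natCast_div_mul_floor {k : ℕ} (hk : 0 < k) (g : ℕ → ℝ≥0∞) (n : ℕ) :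
    ∫⁻ u in Ico 0 ((n : ℝ) / k), k * g ⌊u * k⌋₊ = ∑ z ∈ Finset.range n, g z := by
  have hk' : (0 : ℝ) < k := Nat.cast_pos.mpr hk
  induction n with
  | zero => simp
  | succ n ih =>
    have hfloor : ∀ u ∈ Ico ((n : ℝ) / k) ((n + 1 : ℕ) / k), ⌊u * k⌋₊ = n := fun u hu =>
      Nat.floor_eq_on_Ico n _ ⟨(div_le_iff₀ hk').mp hu.1, by
        simpa using (lt_div_iff₀ hk').mp hu.2⟩
    have hlen : volume (Ico ((n : ℝ) / k) ((n + 1 : ℕ) / k)) = (k : ℝ≥0∞)⁻¹ := by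
      rw [Real.volume_Ico, Nat.cast_succ, add_div, add_sub_cancel_left, one_div,
        ENNReal.ofReal_inv_of_pos hk', ENNReal.ofReal_natCast]
    rw [← Ico_union_Ico_eq_Ico (b := (n : ℝ) / k) (by positivity) (by gcongr; simp),
      lintegral_union measurableSet_Ico Ico_disjoint_Ico_same, ih,
      setLIntegral_congr_fun measurableSet_Ico (fun u hu => by rw [hfloor u hu]),
      setLIntegral_const, hlen, mul_right_comm,
      ENNReal.mul_inv_cancel (by exact_mod_cast hk.ne') (ENNReal.natCast_ne_top k), one_mul,
      Finset.sum_range_succ]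

theorem setLIntegral_Icc_mul_floor (k : ℕ) (g : ℕ → ℝ≥0∞) :
    ∫⁻ u in Icc (0 : ℝ) 1, k * g ⌊u * k⌋₊ = ∑ z ∈ Finset.range k, g z := by
  rcases k.eq_zero_or_pos with rfl | hk
  · simp
  rw [← Measure.restrict_congr_set Ico_ae_eq_Icc, ← setLIntegral_Ico_natCast_div_mul_floor hk,
    div_self (Nat.cast_pos.mpr hk).ne']

/- Neither `(v, m) ↦ m v` nor the hitting times of `m` are measurable for the product σ-algebra
on `ℝ → ℕ`. These versions read `m` at rationals only, and agree with them on monotone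
right-continuous paths. -/
noncomputable def ratRightEval (p : ℝ × (ℝ → ℕ)) : ℕ :=
  ⌊(⨅ q : ℚ, if p.1 ≤ q then (p.2 q : ℝ≥0∞) else ⊤).toReal⌋₊

noncomputable def ratHittingTime (p : (ℝ → ℕ) × ℕ) : ℝ≥0∞ :=
  ⨅ q : ℚ, if 0 ≤ (q : ℝ) ∧ p.2 ≤ p.1 q then ENNReal.ofReal q else ⊤

theorem measurable_ratRightEval : Measurable ratRightEval := by
  refine Nat.measurable_floor.comp <| ENNReal.measurable_toReal.comp <| .iInf fun q => ?_
  exact Measurable.ite (measurableSet_le measurable_fst measurable_const)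
    (measurable_from_top.comp ((measurable_pi_apply _).comp measurable_snd)) measurable_const

theorem measurable_ratHittingTime : Measurable ratHittingTime := by
  refine measurable_from_prod_countable_left fun n => Measurable.iInf fun q => ?_
  refine Measurable.ite ?_ measurable_const measurable_const
  exact (MeasurableSet.const _).inter (measurableSet_le measurable_const (measurable_pi_apply _))

theorem ratRightEval_eq {v : ℝ} {m : ℝ → ℕ} (hm : Monotone m)
    (hrc : ∃ ε > (0 : ℝ), ∀ s ∈ Ico v (v + ε), m s = m v) :
    ratRightEval (v, m) = m v := by
  obtain ⟨ε, hε, hconst⟩ := hrc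
  suffices h : (⨅ q : ℚ, if v ≤ q then (m q : ℝ≥0∞) else ⊤) = m v by
    simp [ratRightEval, h]
  refine le_antisymm ?_ (le_iInf fun q => ?_)
  · obtain ⟨q, hvq, hqε⟩ := exists_rat_btwn (lt_add_of_pos_right v hε)
    exact iInf_le_of_le q (by rw [if_pos hvq.le, hconst q ⟨hvq.le, hqε⟩])
  · split_ifs with hvq
    · exact_mod_cast hm hvq
    · exact le_top

theorem ratHittingTime_eq {m : ℝ → ℕ} (hm : Monotone m) (n : ℕ) :
    ratHittingTime (m, n) = sInf (ENNReal.ofReal '' {t : ℝ | 0 ≤ t ∧ n ≤ m t}) := by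
  refine le_antisymm (le_sInf ?_) (le_iInf fun q => ?_)
  · rintro _ ⟨t, ⟨ht0, htn⟩, rfl⟩
    refine ENNReal.le_of_forall_pos_le_add fun ε hε _ => ?_
    obtain ⟨q, htq, hqε⟩ := exists_rat_btwn (lt_add_of_pos_right t hε)
    calc ratHittingTime (m, n) ≤ ENNReal.ofReal q :=
          iInf_le_of_le q (by rw [if_pos ⟨ht0.trans htq.le, htn.trans (hm htq.le)⟩])
      _ ≤ ENNReal.ofReal (t + ε) := ENNReal.ofReal_le_ofReal hqε.le
      _ ≤ ENNReal.ofReal t + ε :=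
          ENNReal.ofReal_add_le.trans_eq (by rw [ENNReal.ofReal_coe_nnreal])
  · split_ifs with hq
    · exact sInf_le ⟨q, hq, rfl⟩
    · exact le_top

theorem lintegral_mul_floor_mul_of_indepFun {Ω β : Type*} [MeasurableSpace Ω]
    [MeasurableSpace β] {P : Measure Ω} [IsFiniteMeasure P] {X : Ω → β} {U : Ω → ℝ}
    (hX : Measurable X) (hU : Measurable U) (hUlaw : P.map U = volume.restrict (Icc 0 1))
    (hXU : IndepFun X U P) {K : β → ℕ} (hK : Measurable K) {g : β → ℕ → ℝ≥0∞}
    (hg : ∀ z, Measurable (g · z)) :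
    ∫⁻ ω, K (X ω) * g (X ω) ⌊U ω * K (X ω)⌋₊ ∂P
      = ∫⁻ ω, ∑ z ∈ Finset.range (K (X ω)), g (X ω) z ∂P := by
  set φ : β × ℝ → ℝ≥0∞ := fun p => K p.1 * g p.1 ⌊p.2 * K p.1⌋₊
  have hK' : Measurable fun p : β × ℝ => K p.1 := hK.comp measurable_fst
  have hg' : Measurable fun p : β × ℕ => g p.1 p.2 := measurable_from_prod_countable_left hg
  have hφ : Measurable φ := (measurable_from_top.comp hK').mul <| hg'.comp <| measurable_fst.prodMk
    (Nat.measurable_floor.comp (measurable_snd.mul (measurable_from_top.comp hK')))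
  have hprod : P.map (fun ω => (X ω, U ω)) = (P.map X).prod (volume.restrict (Icc 0 1)) := by
    rw [← hUlaw]
    exact (indepFun_iff_map_prod_eq_prod_map_map hX.aemeasurable hU.aemeasurable).mp hXU
  calc ∫⁻ ω, φ (X ω, U ω) ∂P
      = ∫⁻ x, (∫⁻ u in Icc (0 : ℝ) 1, φ (x, u)) ∂P.map X := by
        rw [← lintegral_map hφ (hX.prodMk hU), hprod, lintegral_prod _ hφ.aemeasurable]
    _ = ∫⁻ ω, (∫⁻ u in Icc (0 : ℝ) 1, φ (X ω, u)) ∂P :=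
        lintegral_map hφ.lintegral_prod_right' hX
    _ = _ := lintegral_congr fun ω => setLIntegral_Icc_mul_floor (K (X ω)) (g (X ω))

theorem tsum_tsum_setLIntegral_eq_lintegral_sum_range {Ω : Type*} [MeasurableSpace Ω]
    (P : Measure Ω) {N : Ω → ℕ} (hN : Measurable N) (h : ℕ → Ω → ℝ≥0∞)
    (hh : ∀ z, Measurable (h z)) :
    ∑' (x : ℕ) (z : ℕ), ∫⁻ ω in {ω | N ω = (x + 1) + z}, h z ω ∂P
      = ∫⁻ ω, ∑ z ∈ Finset.range (N ω), h z ω ∂P := by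
  have hunion : ∀ z, ⋃ x : ℕ, {ω | N ω = (x + 1) + z} = {ω | z < N ω} := fun z => by
    ext ω
    simp only [mem_iUnion, mem_ofPred_eq]
    exact ⟨fun ⟨x, hx⟩ => by omega, fun hz => ⟨N ω - z - 1, by omega⟩⟩
  have hdisj : ∀ z, Pairwise (Function.onFun Disjoint fun x : ℕ => {ω | N ω = (x + 1) + z}) :=
    fun z x y hxy => Set.disjoint_left.mpr fun ω hx hy => hxy (by simp_all)
  have hlt : ∀ z, MeasurableSet {ω | z < N ω} := fun z => measurableSet_lt measurable_const hN
  calc ∑' (x : ℕ) (z : ℕ), ∫⁻ ω in {ω | N ω = (x + 1) + z}, h z ω ∂P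
      = ∑' z : ℕ, ∫⁻ ω in {ω | z < N ω}, h z ω ∂P := by
        rw [ENNReal.tsum_comm]
        refine tsum_congr fun z => ?_
        rw [← hunion,
          lintegral_iUnion (fun x => measurableSet_eq_fun hN measurable_const) (hdisj z)]
    _ = ∫⁻ ω, ∑' z : ℕ, {ω | z < N ω}.indicator (h z) ω ∂P := by
        rw [lintegral_tsum fun z => ((hh z).indicator (hlt z)).aemeasurable]
        exact tsum_congr fun z => (lintegral_indicator (hlt z) _).symm
    _ = _ := by
        refine lintegral_congr fun ω => ?_
        rw [tsum_eq_sum (s := Finset.range (N ω)) fun z hz => by simp_all]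
        exact Finset.sum_congr rfl fun z hz => by simp_all

theorem size_biased_ladder_law_general
    {Ω : Type*} [MeasureSpace Ω] [IsProbabilityMeasure (ℙ : Measure Ω)]
    (V : Ω → ℝ) (hVmeas : Measurable V)
    (μ : Ω → ℝ → ℕ)
    (hμmeas : ∀ t, Measurable fun ω => μ ω t)
    (hμmono : ∀ ω, Monotone (μ ω))
    (hμrc : ∀ ω t, ∃ ε > (0 : ℝ), ∀ s ∈ Set.Ico t (t + ε), μ ω s = μ ω t)
    (A : Ω → ℕ → ℝ≥0∞)
    (hA : ∀ ω n, A ω n = sInf (ENNReal.ofReal '' {t : ℝ | 0 ≤ t ∧ n ≤ μ ω t}))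
    (U : Ω → ℝ) (hUmeas : Measurable U)
    (hUlaw : Measure.map U ℙ = (volume : Measure ℝ).restrict (Set.Icc 0 1))
    (hindep : IndepFun (fun ω => (V ω, μ ω)) U ℙ)
    (f : ℝ × ℕ × ℝ≥0∞ → ℝ≥0∞) (hf : Measurable f) :
    ∫⁻ ω, (μ ω (V ω) : ℝ≥0∞)
        * f (V ω, ⌊U ω * (μ ω (V ω) : ℝ)⌋₊, A ω ⌊U ω * (μ ω (V ω) : ℝ)⌋₊) ∂ℙ
      = ∑' (x : ℕ) (z : ℕ),
          ∫⁻ ω in {ω | μ ω (V ω) = (x + 1) + z}, f (V ω, z, A ω z) ∂ℙ := by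
  set X : Ω → ℝ × (ℝ → ℕ) := fun ω => (V ω, μ ω)
  have hX : Measurable X := hVmeas.prodMk (measurable_pi_lambda _ hμmeas)
  have hμV : ∀ ω, ratRightEval (X ω) = μ ω (V ω) := fun ω =>
    ratRightEval_eq (hμmono ω) (hμrc ω (V ω))
  have hAμ : ∀ ω z, ratHittingTime ((X ω).2, z) = A ω z := fun ω z =>
    (ratHittingTime_eq (hμmono ω) z).trans (hA ω z).symm
  set g : ℝ × (ℝ → ℕ) → ℕ → ℝ≥0∞ := fun p z => f (p.1, z, ratHittingTime (p.2, z))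
  have hg : ∀ z, Measurable (g · z) := fun z => hf.comp <| measurable_fst.prodMk <|
    measurable_const.prodMk <| measurable_ratHittingTime.comp <|
      measurable_snd.prodMk measurable_const
  have hN : Measurable fun ω => μ ω (V ω) := funext hμV ▸ measurable_ratRightEval.comp hX
  have hLHS := lintegral_mul_floor_mul_of_indepFun hX hUmeas hUlaw hindep
    measurable_ratRightEval hg
  simp only [g, hμV, hAμ] at hLHS
  rw [hLHS, tsum_tsum_setLIntegral_eq_lintegral_sum_range _ hN _ fun z => ?_]
  simpa only [Function.comp_def, g, hAμ] using (hg z).comp hX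

/-- Lemma `lemma:law` of the paper. With `Ẑ = ⌊U μ(V)⌋` and
`R̂ = A(Ẑ)` (the location of the `Ẑ`-th atom of `μ`), for every nonnegative measurable
`f`, `E[μ(V) f(V, Ẑ, R̂)] = Σ_{x ≥ 1} Σ_{z ≥ 0} E[f(V, z, A(z)); μ(V) = x + z]`. -/
theorem size_biased_ladder_law
    {Ω : Type*} [MeasureSpace Ω] [IsProbabilityMeasure (ℙ : Measure Ω)]
    (V : Ω → ℝ) (hVmeas : Measurable V) (hVpos : ∀ ω, 0 < V ω)
    (μ : Ω → ℝ → ℕ)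
    (hμmeas : ∀ t, Measurable fun ω => μ ω t)
    (hμmono : ∀ ω, Monotone (μ ω))
    (hμ0 : ∀ ω, μ ω 0 = 0)
    (hμrc : ∀ ω t, ∃ ε > (0 : ℝ), ∀ s ∈ Set.Ico t (t + ε), μ ω s = μ ω t)
    (A : Ω → ℕ → ℝ≥0∞)
    (hA : ∀ ω n, A ω n = sInf (ENNReal.ofReal '' {t : ℝ | 0 ≤ t ∧ n ≤ μ ω t}))
    (U : Ω → ℝ) (hUmeas : Measurable U)
    (hUlaw : Measure.map U ℙ = (volume : Measure ℝ).restrict (Set.Icc 0 1))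
    (hindep : IndepFun (fun ω => (V ω, μ ω)) U ℙ)
    (f : ℝ × ℕ × ℝ≥0∞ → ℝ≥0∞) (hf : Measurable f) :
    ∫⁻ ω, (μ ω (V ω) : ℝ≥0∞)
        * f (V ω, ⌊U ω * (μ ω (V ω) : ℝ)⌋₊, A ω ⌊U ω * (μ ω (V ω) : ℝ)⌋₊) ∂ℙ
      = ∑' (x : ℕ) (z : ℕ),
          ∫⁻ ω in {ω | μ ω (V ω) = (x + 1) + z}, f (V ω, z, A ω z) ∂ℙ :=
  size_biased_ladder_law_general V hVmeas μ hμmeas hμmono hμrc A hA U hUmeas hUlaw hindep f hf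
end

section
/- Under Assumptions V, R1, R2 with offspring-biased quantities Ẑ = ⌊U·μ(V)⌋ and R̂ = A(Ẑ): let g : ℝ² → ℝ be measurable, bounded, and equal to 0 in a neighborhood of the origin (i.e. there is m > 0 with g(u,v) = 0 whenever |u| < m and |v| < m). Then there exists δ₀ > 0 such that for every δ ∈ (0, δ₀), p·v_p·E[μ(V)·g(v_p·R̂, v_p·Ẑ)·1{V < δ/v_p}] → 0 as p → ∞. (By the size-biasing lemma, the left side equals p·v_p·E[g(v_p·R(1), v_p·𝒵(1)); V_{T(1)−1} < δ/v_p] for the ladder variables of the Lukasiewicz path.) -/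
open MeasureTheory ProbabilityTheory Filter Topology
open scoped ENNReal

/-!
On `{V < δ / v_p}` we have `v_p R̂ ≤ v_p V < δ < m`, so the integrand vanishes unless
`v_p Ẑ ≥ m`; since `Ẑ ≤ μ(V) ≤ μ(δ / v_p)`, the quantity is at most `C p E[X_p; X_p ≥ m]` with
`X_p = v_p μ(δ / v_p)`. Cut `{X_p ≥ m}` into the slices `X_p ∈ [m sᵏ, m sᵏ⁺¹)`. Assumption V makes
`p ↦ v_p` regularly varying of index `-1/γ`, so there is an index `q_k` with
`v_{q_k} ≈ v_p / sᵏ` and `q_k ≥ p (2s)ᵏ / 8` as soon as `s^(γ-1) ≥ 16`; Assumption R2 at `q_k`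
bounds the `k`-th slice probability by `ε / q_k`, and the slices sum to `O(ε)`.
-/

theorem exists_one_lt_mul_le_rpow {γ K : ℝ} (hγ : 1 < γ) (hK : 1 < K) :
    ∃ s : ℝ, 1 < s ∧ K * s ≤ s ^ γ := by
  have hγ' : γ - 1 ≠ 0 := sub_ne_zero.2 hγ.ne'
  refine ⟨K ^ (γ - 1)⁻¹, Real.one_lt_rpow hK (inv_pos.2 (sub_pos.2 hγ)), le_of_eq ?_⟩
  have hs : 0 ≤ K ^ (γ - 1)⁻¹ := Real.rpow_nonneg (by linarith) _
  calc K * K ^ (γ - 1)⁻¹ = K ^ (γ - 1)⁻¹ * (K ^ (γ - 1)⁻¹) ^ (γ - 1) := by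
        rw [Real.rpow_inv_rpow (by linarith) hγ', mul_comm]
    _ = (K ^ (γ - 1)⁻¹) ^ γ := by
        rw [← Real.rpow_one_add' hs (by linarith), add_sub_cancel]

section IndexComparison

variable {v : ℕ → ℝ} {γ : ℝ}

/-- A one-sided form of regular variation of `v` with index `-1/γ`: `v q ≤ x v p` forces
`q ≳ x^(-γ) p`. -/
def IndexComparable (v : ℕ → ℝ) (γ : ℝ) : Prop :=
  ∀ x > 0, ∀ᶠ pq : ℕ × ℕ in atTop, v pq.2 ≤ x * v pq.1 → (pq.1 : ℝ) ≤ 2 * x ^ γ * pq.2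

theorem indexComparable_of_tendsto {T : ℝ → ℝ} (hT : Antitone T) (hv : ∀ p, 0 < v p)
    (hlim : ∀ x > 0, Tendsto (fun p : ℕ => p * T (x / v p)) atTop (𝓝 (x ^ (-γ)))) :
    IndexComparable v γ := by
  intro x hx
  have hxγ : 0 < x ^ γ := Real.rpow_pos_of_pos hx γ
  have h₁ : ∀ᶠ q : ℕ in atTop, 3 / 4 ≤ q * T (1 / v q) := by
    refine (hlim 1 one_pos).eventually (eventually_ge_nhds ?_)
    rw [Real.one_rpow]; norm_num
  have h₂ : ∀ᶠ p : ℕ in atTop, p * T (x⁻¹ / v p) ≤ 3 / 2 * x ^ γ := by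
    refine (hlim x⁻¹ (inv_pos.2 hx)).eventually (eventually_le_nhds ?_)
    rw [Real.inv_rpow hx.le, Real.rpow_neg hx.le, inv_inv]; linarith
  rw [← prod_atTop_atTop_eq]
  filter_upwards [tendsto_snd.eventually h₁, tendsto_fst.eventually h₂] with ⟨p, q⟩ hq hp hvq
  have hT' : T (1 / v q) ≤ T (x⁻¹ / v p) := hT <| by
    rwa [div_le_div_iff₀ (hv p) (hv q), one_mul, inv_mul_le_iff₀ hx]
  have hp0 : (0 : ℝ) ≤ p := p.cast_nonneg
  have hq0 : (0 : ℝ) ≤ q := q.cast_nonneg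
  nlinarith [mul_le_mul_of_nonneg_left hT' (mul_nonneg hp0 hq0)]

theorem IndexComparable.eventually_le_mul_succ (h : IndexComparable v γ) {w : ℝ} (hw : 0 < w)
    (hwγ : w ^ γ = 4) : ∀ᶠ q in atTop, v q ≤ w * v (q + 1) := by
  have hpair : Tendsto (fun q : ℕ => (q, q + 1)) atTop atTop := by
    rw [← prod_atTop_atTop_eq]
    exact tendsto_id.prodMk (tendsto_add_atTop_nat 1)
  filter_upwards [hpair.eventually (h w⁻¹ (inv_pos.2 hw)), eventually_ge_atTop 2] with q hq hq2
  by_contra hlt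
  have hvq : v (q + 1) ≤ w⁻¹ * v q := by
    rw [inv_mul_eq_div, le_div_iff₀ hw]; linarith
  have hcmp := hq hvq
  rw [Real.inv_rpow hw.le, hwγ] at hcmp
  have : (2 : ℝ) ≤ q := by exact_mod_cast hq2
  push_cast at hcmp
  linarith

theorem exists_index_of_le_mul_succ (hv0 : Tendsto v atTop (𝓝 0)) {w t : ℝ} {Q : ℕ}
    (hgap : ∀ q ≥ Q, v q ≤ w * v (q + 1)) (ht : 0 < t) (hQ : t < v Q) :
    ∃ q, Q ≤ q ∧ t < w * v q ∧ v q ≤ t := by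
  classical
  have hex : ∃ q, Q ≤ q ∧ v q ≤ t :=
    ((hv0.eventually (eventually_le_nhds ht)).and (eventually_ge_atTop Q)).exists.imp
      fun _ h => h.symm
  obtain ⟨hQq, hqt⟩ := Nat.find_spec hex
  have hQlt : Q < Nat.find hex := lt_of_le_of_ne hQq fun h => by
    rw [← h] at hqt; linarith
  have hprev : t < v (Nat.find hex - 1) := by
    have := Nat.find_min hex (Nat.sub_one_lt_of_lt hQlt)
    exact not_le.1 fun h => this ⟨Nat.le_sub_one_of_lt hQlt, h⟩
  refine ⟨Nat.find hex, hQq, ?_, hqt⟩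
  have := hgap _ (Nat.le_sub_one_of_lt hQlt)
  rw [Nat.sub_add_cancel (Nat.one_le_of_lt hQlt)] at this
  linarith

theorem eventually_exists_index_pow_mul_mem (hv : ∀ p, 0 < v p) (hv0 : Tendsto v atTop (𝓝 0))
    {s w : ℝ} (hs : 1 ≤ s) (hw : 0 < w) (hgap : ∀ᶠ q in atTop, v q ≤ w * v (q + 1)) (Q : ℕ) :
    ∀ᶠ p in atTop, ∀ k : ℕ, ∃ q, Q ≤ q ∧ v p < s ^ k * v q ∧ s ^ k * v q ≤ w * v p := by
  obtain ⟨Q₁, hQ₁⟩ := eventually_atTop.1 hgap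
  filter_upwards [hv0.eventually (eventually_lt_nhds (div_pos (hv (max Q Q₁)) hw))] with p hp k
  have hsk : 0 < s ^ k := pow_pos (by linarith) k
  have hQ : w * v p / s ^ k < v (max Q Q₁) :=
    calc w * v p / s ^ k ≤ w * v p := div_le_self (by nlinarith [hv p]) (one_le_pow₀ hs)
      _ < v (max Q Q₁) := by rwa [lt_div_iff₀ hw, mul_comm] at hp
  obtain ⟨q, hQq, hlt, hle⟩ := exists_index_of_le_mul_succ hv0
    (fun q hq => hQ₁ q (le_trans (le_max_right _ _) hq)) (by have := hv p; positivity) hQ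
  refine ⟨q, le_trans (le_max_left _ _) hQq, ?_, by rwa [le_div_iff₀ hsk, mul_comm] at hle⟩
  rw [div_lt_iff₀ hsk] at hlt
  nlinarith

theorem IndexComparable.eventually_exists_index_pow (h : IndexComparable v γ) (hv : ∀ p, 0 < v p)
    (hv0 : Tendsto v atTop (𝓝 0)) {s w : ℝ} (hs : 1 < s) (hw : 0 < w) (hwγ : w ^ γ = 4)
    (hsγ : 16 * s ≤ s ^ γ) (Q : ℕ) :
    ∀ᶠ p in atTop, ∀ k : ℕ, ∃ q, Q ≤ q ∧ v p < s ^ k * v q ∧ s ^ k * v q ≤ w * v p ∧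
      (p : ℝ) * (2 * s) ^ k ≤ 8 * q := by
  have hs0 : 0 < s := by linarith
  obtain ⟨P₁, hP₁⟩ := eventually_atTop_prod_self.1 (h w hw)
  obtain ⟨P₂, hP₂⟩ := eventually_atTop_prod_self.1 (h (w / s) (by positivity))
  filter_upwards [eventually_exists_index_pow_mul_mem hv hv0 hs.le hw
    (h.eventually_le_mul_succ hw hwγ) (max Q (max P₁ P₂)), eventually_ge_atTop P₁]
    with p hsel hpP₁
  choose q hQq hlow hupp using hsel
  have hratio : 2 * s * (2 * (w / s) ^ γ) ≤ 1 := by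
    have : 0 < s ^ γ := Real.rpow_pos_of_pos hs0 γ
    rw [Real.div_rpow hw.le hs0.le, hwγ, show 2 * s * (2 * (4 / s ^ γ)) = 16 * s / s ^ γ by ring,
      div_le_one this]
    exact hsγ
  have hgrow : ∀ k, (p : ℝ) * (2 * s) ^ k ≤ 8 * q k := by
    intro k
    induction k with
    | zero =>
      have := hP₁ p (q 0) hpP₁ (le_trans (by omega) (hQq 0)) (by simpa using hupp 0)
      rw [hwγ] at this
      simpa using by linarith
    | succ k ih =>
      have hsk : 0 < s ^ k := pow_pos hs0 k
      have hstep : v (q (k + 1)) ≤ w / s * v (q k) := by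
        have : s ^ k * (v (q (k + 1)) * s) < s ^ k * (w * v (q k)) :=
          calc s ^ k * (v (q (k + 1)) * s) = s ^ (k + 1) * v (q (k + 1)) := by ring
            _ ≤ w * v p := hupp _
            _ < w * (s ^ k * v (q k)) := mul_lt_mul_of_pos_left (hlow k) hw
            _ = s ^ k * (w * v (q k)) := by ring
        rw [div_mul_eq_mul_div, le_div_iff₀ hs0]
        exact (lt_of_mul_lt_mul_left this hsk.le).le
      have hcmp := hP₂ (q k) (q (k + 1)) (le_trans (by omega) (hQq k))
        (le_trans (by omega) (hQq (k + 1))) hstep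
      have hwsγ : 0 ≤ (w / s) ^ γ := by positivity
      have hq0 : (0 : ℝ) ≤ q (k + 1) := Nat.cast_nonneg _
      calc (p : ℝ) * (2 * s) ^ (k + 1) = 2 * s * (p * (2 * s) ^ k) := by ring
        _ ≤ 2 * s * (8 * q k) := by gcongr
        _ ≤ 8 * (2 * s * (2 * (w / s) ^ γ)) * q (k + 1) := by nlinarith
        _ ≤ 8 * q (k + 1) := by nlinarith
  exact fun k => ⟨q k, le_trans (le_max_left _ _) (hQq k), hlow k, hupp k, hgrow k⟩

end IndexComparison

theorem ENNReal.tsum_ofReal_mul_pow_succ_mul_ofReal_div_pow {m s ε : ℝ} (hm : 0 ≤ m) (hs : 0 < s)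
    (hε : 0 ≤ ε) :
    ∑' k : ℕ, ENNReal.ofReal (m * s ^ (k + 1)) * ENNReal.ofReal (ε / (2 * s) ^ k) =
      ENNReal.ofReal (2 * m * s * ε) := by
  have hterm : ∀ k : ℕ, ENNReal.ofReal (m * s ^ (k + 1)) * ENNReal.ofReal (ε / (2 * s) ^ k) =
      ENNReal.ofReal (m * s * ε) * 2⁻¹ ^ k := by
    intro k
    rw [← ENNReal.ofReal_mul (by positivity),
      show m * s ^ (k + 1) * (ε / (2 * s) ^ k) = m * s * ε * 2⁻¹ ^ k by
        rw [pow_succ, mul_pow, inv_pow]; field_simp,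
      ENNReal.ofReal_mul (by positivity), ENNReal.ofReal_pow (by norm_num),
      ENNReal.ofReal_inv_of_pos two_pos, ENNReal.ofReal_ofNat]
  simp_rw [hterm, ENNReal.tsum_mul_left, ENNReal.tsum_geometric, ENNReal.one_sub_inv_two, inv_inv]
  rw [← ENNReal.ofReal_ofNat 2, ← ENNReal.ofReal_mul (by positivity)]
  ring_nf

section TailSlices

variable {Ω : Type*} [MeasurableSpace Ω] (P : Measure Ω)

theorem lintegral_ofReal_indicator_Ici_le_tsum {X : Ω → ℝ} (hX : Measurable X) {m s : ℝ}
    (hm : 0 < m) (hs : 1 < s) :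
    ∫⁻ ω, ENNReal.ofReal ((Set.Ici m).indicator id (X ω)) ∂P ≤
      ∑' k : ℕ, ENNReal.ofReal (m * s ^ (k + 1)) * P {ω | m * s ^ k ≤ X ω} := by
  have hmeas : ∀ k : ℕ, MeasurableSet {ω | m * s ^ k ≤ X ω} :=
    fun k => measurableSet_le measurable_const hX
  calc ∫⁻ ω, ENNReal.ofReal ((Set.Ici m).indicator id (X ω)) ∂P
      ≤ ∫⁻ ω, ∑' k : ℕ, {ω | m * s ^ k ≤ X ω}.indicator
          (fun _ => ENNReal.ofReal (m * s ^ (k + 1))) ω ∂P := by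
        refine lintegral_mono fun ω => ?_
        by_cases hXm : m ≤ X ω
        · obtain ⟨k, hk, hk'⟩ := exists_nat_pow_near ((one_le_div hm).2 hXm) hs
          refine le_trans ?_ (ENNReal.le_tsum k)
          rw [Set.indicator_of_mem (Set.mem_Ici.2 hXm),
            Set.indicator_of_mem (show ω ∈ {ω | m * s ^ k ≤ X ω} from (le_div_iff₀' hm).1 hk)]
          exact ENNReal.ofReal_le_ofReal ((div_lt_iff₀' hm).1 hk').le
        · simp [Set.indicator_of_notMem (show X ω ∉ Set.Ici m from hXm)]
    _ = ∑' k : ℕ, ENNReal.ofReal (m * s ^ (k + 1)) * P {ω | m * s ^ k ≤ X ω} := by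
        rw [lintegral_tsum fun k => (measurable_const.indicator (hmeas k)).aemeasurable]
        simp_rw [lintegral_indicator_const (hmeas _)]

theorem enorm_mul_setIntegral_le {F G : Ω → ℝ} {S : Set Ω} {r C : ℝ} (hC : 0 ≤ C)
    (h : ∀ᵐ ω ∂P.restrict S, |r * F ω| ≤ C * G ω) :
    ‖r * ∫ ω in S, F ω ∂P‖ₑ ≤ ENNReal.ofReal C * ∫⁻ ω, ENNReal.ofReal (G ω) ∂P :=
  calc ‖r * ∫ ω in S, F ω ∂P‖ₑ = ‖∫ ω in S, r * F ω ∂P‖ₑ := by rw [integral_const_mul]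
    _ ≤ ∫⁻ ω in S, ‖r * F ω‖ₑ ∂P := enorm_integral_le_lintegral_enorm _
    _ ≤ ∫⁻ ω in S, ENNReal.ofReal (C * G ω) ∂P := lintegral_mono_ae <| h.mono fun ω hω => by
        rw [Real.enorm_eq_ofReal_abs]; exact ENNReal.ofReal_le_ofReal hω
    _ ≤ ∫⁻ ω, ENNReal.ofReal (C * G ω) ∂P := setLIntegral_le_lintegral _ _
    _ = ENNReal.ofReal C * ∫⁻ ω, ENNReal.ofReal (G ω) ∂P := by
        simp_rw [ENNReal.ofReal_mul hC]
        exact lintegral_const_mul' _ _ ENNReal.ofReal_ne_top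

variable [IsFiniteMeasure P] {N : Ω → ℝ → ℝ} {v : ℕ → ℝ} {γ s w m c δ : ℝ}

theorem eventually_mul_measure_slice_le (hN : ∀ ω, Monotone (N ω)) (h : IndexComparable v γ)
    (hv : ∀ p, 0 < v p) (hv0 : Tendsto v atTop (𝓝 0)) (hs : 1 < s) (hw : 0 < w)
    (hwγ : w ^ γ = 4) (hsγ : 16 * s ≤ s ^ γ) (hm : 0 < m) (hδ : 0 ≤ δ) (hδc : δ * w ≤ c)
    (hR : Tendsto (fun q : ℕ => q * (P {ω | m ≤ v q * N ω (c / v q)}).toReal) atTop (𝓝 0))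
    {ε : ℝ} (hε : 0 < ε) :
    ∀ᶠ p : ℕ in atTop, ∀ k : ℕ,
      (p : ℝ) * (P {ω | m * s ^ k ≤ v p * N ω (δ / v p)}).toReal ≤ 8 * ε / (2 * s) ^ k := by
  obtain ⟨Q, hQ⟩ := eventually_atTop.1 (hR.eventually (eventually_le_nhds hε))
  filter_upwards [h.eventually_exists_index_pow hv hv0 hs hw hwγ hsγ (max Q 1)] with p hp k
  obtain ⟨q, hQq, hlow, hupp, hgrow⟩ := hp k
  have hq : (0 : ℝ) < q := by exact_mod_cast le_trans (le_max_right _ _) hQq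
  have hsk : 0 < s ^ k := pow_pos (by linarith) k
  have hsub : {ω | m * s ^ k ≤ v p * N ω (δ / v p)} ⊆ {ω | m ≤ v q * N ω (c / v q)} := by
    refine Set.ofPred_subset_ofPred.2 fun ω hω => ?_
    have hvq : v q ≤ w * v p := le_trans (le_mul_of_one_le_left (hv q).le (one_le_pow₀ hs.le)) hupp
    have htime : δ / v p ≤ c / v q := by
      rw [div_le_div_iff₀ (hv p) (hv q)]
      nlinarith [hv p]
    have hNpos : 0 < N ω (δ / v p) :=
      pos_of_mul_pos_right (lt_of_lt_of_le (by positivity) hω) (hv p).le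
    have : s ^ k * m < s ^ k * (v q * N ω (δ / v p)) := by
      nlinarith [mul_lt_mul_of_pos_right hlow hNpos]
    nlinarith [lt_of_mul_lt_mul_left this hsk.le, hN ω htime, hv q]
  have hPB : (P {ω | m ≤ v q * N ω (c / v q)}).toReal ≤ ε / q := by
    rw [le_div_iff₀ hq, mul_comm]
    exact hQ q (le_trans (le_max_left _ _) hQq)
  have hPE := (ENNReal.toReal_mono (measure_ne_top _ _) (measure_mono hsub)).trans hPB
  rw [le_div_iff₀ (by positivity)]
  calc (p : ℝ) * (P {ω | m * s ^ k ≤ v p * N ω (δ / v p)}).toReal * (2 * s) ^ k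
      ≤ p * (ε / q) * (2 * s) ^ k := by gcongr
    _ = ε / q * (p * (2 * s) ^ k) := by ring
    _ ≤ ε / q * (8 * q) := by gcongr
    _ = 8 * ε := by field_simp

theorem tendsto_natCast_mul_lintegral_indicator_Ici (hNmeas : ∀ t, Measurable fun ω => N ω t)
    (hN : ∀ ω, Monotone (N ω)) (h : IndexComparable v γ)
    (hv : ∀ p, 0 < v p) (hv0 : Tendsto v atTop (𝓝 0)) (hs : 1 < s) (hw : 0 < w)
    (hwγ : w ^ γ = 4) (hsγ : 16 * s ≤ s ^ γ) (hm : 0 < m) (hδ : 0 ≤ δ) (hδc : δ * w ≤ c)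
    (hR : Tendsto (fun q : ℕ => q * (P {ω | m ≤ v q * N ω (c / v q)}).toReal) atTop (𝓝 0)) :
    Tendsto (fun p : ℕ => (p : ℝ≥0∞) *
      ∫⁻ ω, ENNReal.ofReal ((Set.Ici m).indicator id (v p * N ω (δ / v p))) ∂P) atTop (𝓝 0) := by
  rw [ENNReal.tendsto_nhds_zero]
  intro ε hε
  obtain rfl | hεtop := eq_or_ne ε ⊤
  · exact Eventually.of_forall fun _ => le_top
  have hs0 : 0 < s := by linarith
  set ε' := ε.toReal / (16 * m * s)
  have hε' : 0 < ε' := div_pos (ENNReal.toReal_pos hε.ne' hεtop) (by positivity)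
  filter_upwards [eventually_mul_measure_slice_le P hN h hv hv0 hs hw hwγ hsγ hm hδ hδc hR hε']
    with p hp
  calc (p : ℝ≥0∞) * ∫⁻ ω, ENNReal.ofReal ((Set.Ici m).indicator id (v p * N ω (δ / v p))) ∂P
      ≤ p * ∑' k : ℕ, ENNReal.ofReal (m * s ^ (k + 1)) *
          P {ω | m * s ^ k ≤ v p * N ω (δ / v p)} := by
        gcongr
        exact lintegral_ofReal_indicator_Ici_le_tsum P (measurable_const.mul (hNmeas _)) hm hs
    _ = ∑' k : ℕ, ENNReal.ofReal (m * s ^ (k + 1)) *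
          (p * P {ω | m * s ^ k ≤ v p * N ω (δ / v p)}) := by
        rw [← ENNReal.tsum_mul_left]
        simp_rw [mul_left_comm]
    _ ≤ ∑' k : ℕ, ENNReal.ofReal (m * s ^ (k + 1)) * ENNReal.ofReal (8 * ε' / (2 * s) ^ k) := by
        gcongr with k
        rw [← ENNReal.ofReal_toReal (measure_ne_top P _), ← ENNReal.ofReal_natCast,
          ← ENNReal.ofReal_mul p.cast_nonneg]
        exact ENNReal.ofReal_le_ofReal (hp k)
    _ = ε := by
        rw [ENNReal.tsum_ofReal_mul_pow_succ_mul_ofReal_div_pow hm.le hs0 (by positivity)]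
        rw [show 2 * m * s * (8 * ε') = ε.toReal by simp only [ε']; field_simp; ring]
        exact ENNReal.ofReal_toReal hεtop

end TailSlices

theorem abs_mul_mul_le_indicator_Ici {g : ℝ × ℝ → ℝ} {C m : ℝ} (hC : ∀ q, |g q| ≤ C)
    (hg : ∀ u w : ℝ, |u| < m → |w| < m → g (u, w) = 0) {r a z n N : ℝ} (hr : 0 < r)
    (ha : 0 ≤ a) (hra : r * a < m) (hz : 0 ≤ z) (hzn : z ≤ n) (hnN : n ≤ N) :
    |r * (n * g (r * a, r * z))| ≤ C * (Set.Ici m).indicator id (r * N) := by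
  have hC0 : 0 ≤ C := (abs_nonneg _).trans (hC 0)
  by_cases hzm : r * z < m
  · have hm : 0 < m := lt_of_le_of_lt (by positivity) hzm
    rw [hg _ _ (by rwa [abs_of_nonneg (by positivity)]) (by rwa [abs_of_nonneg (by positivity)]),
      mul_zero, mul_zero, abs_zero]
    exact mul_nonneg hC0 (Set.indicator_nonneg (fun x hx => hm.le.trans hx) _)
  · have hrN : r * z ≤ r * N := mul_le_mul_of_nonneg_left (hzn.trans hnN) hr.le
    rw [Set.indicator_of_mem (Set.mem_Ici.2 ((not_lt.1 hzm).trans hrN)), id, abs_mul, abs_mul,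
      abs_of_pos hr, abs_of_nonneg (hz.trans hzn)]
    calc r * (n * |g (r * a, r * z)|) ≤ r * (N * C) := by
          gcongr
          · exact hz.trans (hzn.trans hnN)
          · exact hC _
      _ = C * (r * N) := by ring

theorem abs_mul_mul_floor_le_indicator_Ici {f : ℝ → ℕ} (hf : Monotone f) {g : ℝ × ℝ → ℝ}
    {C m : ℝ} (hC : ∀ q, |g q| ≤ C) (hg : ∀ u w : ℝ, |u| < m → |w| < m → g (u, w) = 0)
    {r y b u : ℝ} (hr : 0 < r) (hy : 0 ≤ y) (hyb : y ≤ b) (hrb : r * b < m)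
    (hu : u ∈ Set.Icc (0 : ℝ) 1) :
    |r * (f y * g (r * sInf {t : ℝ | 0 ≤ t ∧ ⌊u * f y⌋₊ ≤ f t}, r * ⌊u * f y⌋₊))| ≤
      C * (Set.Ici m).indicator id (r * f b) := by
  have hz : ⌊u * f y⌋₊ ≤ f y := Nat.floor_le_of_le (mul_le_of_le_one_left (Nat.cast_nonneg _) hu.2)
  have hA : sInf {t : ℝ | 0 ≤ t ∧ ⌊u * f y⌋₊ ≤ f t} ≤ y := csInf_le ⟨0, fun t ht => ht.1⟩ ⟨hy, hz⟩
  refine abs_mul_mul_le_indicator_Ici hC hg hr (Real.sInf_nonneg fun t ht => ht.1) ?_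
    (Nat.cast_nonneg _) (by exact_mod_cast hz) (by exact_mod_cast hf hyb)
  calc r * sInf {t : ℝ | 0 ≤ t ∧ ⌊u * f y⌋₊ ≤ f t} ≤ r * b := by gcongr; exact hA.trans hyb
    _ < m := hrb

theorem biased_limit_small_V_general
    {Ω : Type*} [MeasureSpace Ω] [IsProbabilityMeasure (ℙ : Measure Ω)]
    (γ : ℝ) (hγ : γ ∈ Set.Ioo (1 : ℝ) 2)
    (V : Ω → ℝ) (hVmeas : Measurable V) (hVpos : ∀ ω, 0 < V ω)
    (v : ℕ → ℝ) (hv : ∀ p, 0 < v p) (hv0 : Tendsto v atTop (nhds 0))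
    (hV : ∀ x > (0 : ℝ), Tendsto (fun p : ℕ =>
        (p : ℝ) * (ℙ {ω | x / v p ≤ V ω}).toReal) atTop (nhds (x ^ (-γ))))
    (μ : Ω → ℝ → ℕ)
    (hμmeas : ∀ t, Measurable fun ω => μ ω t)
    (hμmono : ∀ ω, Monotone (μ ω))
    (a : ℝ)
    (a' : ℝ) (ha' : a' ∈ Set.Ioo (0 : ℝ) a)
    (hR2 : ∀ x > (0 : ℝ), Tendsto (fun p : ℕ =>
        (p : ℝ) * (ℙ {ω | 1 / a' ≤ v p * (μ ω (x / v p) : ℝ) / x}).toReal)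
        atTop (nhds 0))
    (A : Ω → ℕ → ℝ)
    (hA : ∀ ω n, A ω n = sInf {t : ℝ | 0 ≤ t ∧ n ≤ μ ω t})
    (U : Ω → ℝ) (hUmeas : Measurable U)
    (hUlaw : Measure.map U ℙ = (volume : Measure ℝ).restrict (Set.Icc 0 1))
    (g : ℝ × ℝ → ℝ)
    (hgbdd : ∃ C : ℝ, ∀ q, |g q| ≤ C)
    (m : ℝ) (hm : 0 < m)
    (hgzero : ∀ u w : ℝ, |u| < m → |w| < m → g (u, w) = 0) :
    ∃ δ₀ > (0 : ℝ), ∀ δ : ℝ, 0 < δ → δ < δ₀ →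
      Tendsto (fun p : ℕ => (p : ℝ) * v p *
          ∫ ω in {ω | V ω < δ / v p},
            (μ ω (V ω) : ℝ) * g (v p * A ω ⌊U ω * (μ ω (V ω) : ℝ)⌋₊,
                                  v p * (⌊U ω * (μ ω (V ω) : ℝ)⌋₊ : ℝ)))
        atTop (nhds 0) := by
  obtain ⟨C, hC⟩ := hgbdd
  obtain ⟨s, hs, hsγ⟩ := exists_one_lt_mul_le_rpow hγ.1 (by norm_num : (1 : ℝ) < 16)
  have hwγ : ((4 : ℝ) ^ γ⁻¹) ^ γ = 4 := Real.rpow_inv_rpow (by norm_num) (by linarith [hγ.1])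
  have hw : (0 : ℝ) < 4 ^ γ⁻¹ := by positivity
  have hcmp : IndexComparable v γ := indexComparable_of_tendsto
    (fun y y' hy => ENNReal.toReal_mono (measure_ne_top _ _)
      (measure_mono fun ω (hω : y' ≤ V ω) => hy.trans hω)) hv hV
  have hma' : 0 < m * a' := mul_pos hm ha'.1
  refine ⟨min m (m * a' / 4 ^ γ⁻¹), lt_min hm (div_pos hma' hw), fun δ hδ hδ₀ => ?_⟩
  have hδm : δ < m := hδ₀.trans_le (min_le_left _ _)
  have hδw : δ * 4 ^ γ⁻¹ ≤ m * a' := ((lt_div_iff₀ hw).1 (hδ₀.trans_le (min_le_right _ _))).le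
  have hR : Tendsto (fun q : ℕ => q * (ℙ {ω | m ≤ v q * (μ ω (m * a' / v q) : ℝ)}).toReal)
      atTop (𝓝 0) := by
    refine (hR2 (m * a') hma').congr fun q => ?_
    congr 3
    ext ω
    rw [Set.mem_ofPred_eq, Set.mem_ofPred_eq, div_le_div_iff₀ ha'.1 hma', one_mul,
      mul_le_mul_iff_of_pos_right ha'.1]
  have hU : ∀ᵐ ω ∂(ℙ : Measure Ω), U ω ∈ Set.Icc (0 : ℝ) 1 :=
    ae_of_ae_map hUmeas.aemeasurable (hUlaw ▸ ae_restrict_mem measurableSet_Icc)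
  have hlim := ENNReal.Tendsto.const_mul (tendsto_natCast_mul_lintegral_indicator_Ici ℙ
    (N := fun ω t => μ ω t) (fun t => measurable_from_nat.comp (hμmeas t))
    (fun ω => Nat.mono_cast.comp (hμmono ω)) hcmp hv hv0 hs hw hwγ hsγ hm hδ.le hδw hR)
    (Or.inr (ENNReal.ofReal_ne_top (r := C)))
  rw [mul_zero] at hlim
  refine tendsto_zero_iff_enorm_tendsto_zero.2 (tendsto_of_tendsto_of_tendsto_of_le_of_le
    tendsto_const_nhds hlim (fun _ => zero_le) fun p => ?_)
  rw [mul_assoc, enorm_mul, Real.enorm_natCast, mul_left_comm]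
  gcongr
  refine enorm_mul_setIntegral_le ℙ ((abs_nonneg _).trans (hC 0)) ?_
  filter_upwards [ae_restrict_of_ae hU, ae_restrict_mem (measurableSet_lt hVmeas measurable_const)]
    with ω hUω (hVω : V ω < δ / v p)
  rw [hA]
  exact abs_mul_mul_floor_le_indicator_Ici (hμmono ω) hC hgzero (hv p) (hVpos ω).le hVω.le
    (by rwa [mul_div_cancel₀ δ (hv p).ne']) hUω

/-- Lemma `lemma:g<` of the paper. Under Assumptions V, R1, R2, for
`g` bounded measurable vanishing in a neighborhood of the origin, there is `δ₀ > 0`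
such that for every `δ ∈ (0, δ₀)`,
`p v_p E[μ(V) g(v_p R̂, v_p Ẑ); V < δ/v_p] → 0`, where `Ẑ = ⌊U μ(V)⌋`, `R̂ = A(Ẑ)`. -/
theorem biased_limit_small_V
    {Ω : Type*} [MeasureSpace Ω] [IsProbabilityMeasure (ℙ : Measure Ω)]
    (γ : ℝ) (hγ : γ ∈ Set.Ioo (1 : ℝ) 2)
    (V : Ω → ℝ) (hVmeas : Measurable V) (hVpos : ∀ ω, 0 < V ω)
    (v : ℕ → ℝ) (hv : ∀ p, 0 < v p) (hv0 : Tendsto v atTop (nhds 0))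
    (hV : ∀ x > (0 : ℝ), Tendsto (fun p : ℕ =>
        (p : ℝ) * (ℙ {ω | x / v p ≤ V ω}).toReal) atTop (nhds (x ^ (-γ))))
    (μ : Ω → ℝ → ℕ)
    (hμmeas : ∀ t, Measurable fun ω => μ ω t)
    (hμmono : ∀ ω, Monotone (μ ω))
    (hμ0 : ∀ ω, μ ω 0 = 0)
    (hμrc : ∀ ω t, ∃ ε > (0 : ℝ), ∀ s ∈ Set.Ico t (t + ε), μ ω s = μ ω t)
    (hVμindep : IndepFun V μ ℙ)
    (a : ℝ) (ha : 0 < a)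
    (hR1 : Tendsto (fun t : ℝ => ∫ ω, |(μ ω t : ℝ) / t - 1 / a|) atTop (nhds 0))
    (a' : ℝ) (ha' : a' ∈ Set.Ioo (0 : ℝ) a)
    (hR2 : ∀ x > (0 : ℝ), Tendsto (fun p : ℕ =>
        (p : ℝ) * (ℙ {ω | 1 / a' ≤ v p * (μ ω (x / v p) : ℝ) / x}).toReal)
        atTop (nhds 0))
    (A : Ω → ℕ → ℝ)
    (hA : ∀ ω n, A ω n = sInf {t : ℝ | 0 ≤ t ∧ n ≤ μ ω t})
    (U : Ω → ℝ) (hUmeas : Measurable U)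
    (hUlaw : Measure.map U ℙ = (volume : Measure ℝ).restrict (Set.Icc 0 1))
    (hUindep : IndepFun (fun ω => (V ω, μ ω)) U ℙ)
    (g : ℝ × ℝ → ℝ) (hgmeas : Measurable g)
    (hgbdd : ∃ C : ℝ, ∀ q, |g q| ≤ C)
    (m : ℝ) (hm : 0 < m)
    (hgzero : ∀ u w : ℝ, |u| < m → |w| < m → g (u, w) = 0) :
    ∃ δ₀ > (0 : ℝ), ∀ δ : ℝ, 0 < δ → δ < δ₀ →
      Tendsto (fun p : ℕ => (p : ℝ) * v p *
          ∫ ω in {ω | V ω < δ / v p},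
            (μ ω (V ω) : ℝ) * g (v p * A ω ⌊U ω * (μ ω (V ω) : ℝ)⌋₊,
                                  v p * (⌊U ω * (μ ω (V ω) : ℝ)⌋₊ : ℝ)))
        atTop (nhds 0) :=
  biased_limit_small_V_general γ hγ V hVmeas hVpos v hv hv0 hV μ hμmeas hμmono a a' ha' hR2 A hA U
    hUmeas hUlaw g hgbdd m hm hgzero
end
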